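/- arXiv:1701.02270 — 5 statements merged into one kernel-verified Lean document; each statement's English description precedes it below -/
import Mathlib

section
/- Let A and B be skew-symmetric 4×4 complex matrices that are linearly independent and have no common kernel vector (ker A ∩ ker B = {0}). Then there exist an invertible 4×4 complex matrix X and a basis (A', B') of the two-dimensional span of A and B such that the pair (X A' Xᵀ, X B' Xᵀ) equals either (S₁₂, S₃₄) or (S₂₄, S₁₄ + S₂₃). -/
open Matrix

/-- The skew-symmetric matrix with `(i,j)` entry `1`, `(j,i)` entry `-1`, all other entries `0`. -/
def skewS {n : ℕ} (i j : Fin n) : Matrix (Fin n) (Fin n) ℂ :=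
  Matrix.single i j 1 - Matrix.single j i 1

namespace PencilAux

/-- Pfaffian of a 4×4 (skew) matrix. -/
def Pf (M : Matrix (Fin 4) (Fin 4) ℂ) : ℂ :=
  M 0 1 * M 2 3 - M 0 2 * M 1 3 + M 0 3 * M 1 2

/-- Polarization of the Pfaffian. -/
def Pp (M N : Matrix (Fin 4) (Fin 4) ℂ) : ℂ :=
  M 0 1 * N 2 3 + N 0 1 * M 2 3 - M 0 2 * N 1 3 - N 0 2 * M 1 3
    + M 0 3 * N 1 2 + N 0 3 * M 1 2

def wedge (u v : Fin 4 → ℂ) : Matrix (Fin 4) (Fin 4) ℂ :=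
  Matrix.of fun i j => u i * v j - u j * v i

lemma wedge_apply (u v : Fin 4 → ℂ) (i j : Fin 4) :
    wedge u v i j = u i * v j - u j * v i := rfl

lemma skew_apply {M : Matrix (Fin 4) (Fin 4) ℂ} (hM : Mᵀ = -M) (i j : Fin 4) :
    M j i = -M i j := by
  have := congrFun (congrFun hM i) j
  simpa [Matrix.transpose_apply] using this

lemma skew_diag {M : Matrix (Fin 4) (Fin 4) ℂ} (hM : Mᵀ = -M) (i : Fin 4) :
    M i i = 0 := by
  have h := skew_apply hM i i
  linear_combination h / 2

lemma det4 (M : Matrix (Fin 4) (Fin 4) ℂ) : M.det =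
    M 0 0 * (M 1 1 * (M 2 2 * M 3 3 - M 2 3 * M 3 2) - M 1 2 * (M 2 1 * M 3 3 - M 2 3 * M 3 1) + M 1 3 * (M 2 1 * M 3 2 - M 2 2 * M 3 1))
  - M 0 1 * (M 1 0 * (M 2 2 * M 3 3 - M 2 3 * M 3 2) - M 1 2 * (M 2 0 * M 3 3 - M 2 3 * M 3 0) + M 1 3 * (M 2 0 * M 3 2 - M 2 2 * M 3 0))
  + M 0 2 * (M 1 0 * (M 2 1 * M 3 3 - M 2 3 * M 3 1) - M 1 1 * (M 2 0 * M 3 3 - M 2 3 * M 3 0) + M 1 3 * (M 2 0 * M 3 1 - M 2 1 * M 3 0))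
  - M 0 3 * (M 1 0 * (M 2 1 * M 3 2 - M 2 2 * M 3 1) - M 1 1 * (M 2 0 * M 3 2 - M 2 2 * M 3 0) + M 1 2 * (M 2 0 * M 3 1 - M 2 1 * M 3 0)) := by
  have h : M = Matrix.of ![![M 0 0, M 0 1, M 0 2, M 0 3], ![M 1 0, M 1 1, M 1 2, M 1 3],
      ![M 2 0, M 2 1, M 2 2, M 2 3], ![M 3 0, M 3 1, M 3 2, M 3 3]] := by
    ext i j; fin_cases i <;> fin_cases j <;> rfl
  have s1 : (Fin.succAbove (1:Fin 4) (2:Fin 3)) = 3 := by decide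
  have s2 : (Fin.succAbove (2:Fin 4) (2:Fin 3)) = 3 := by decide
  have s3 : (Fin.castSucc (2:Fin 3) : Fin 4) = 2 := by decide
  have s4 : (Fin.succAbove (3:Fin 4) (2:Fin 3)) = 2 := by decide
  rw [h]
  simp [Matrix.det_succ_row_zero, Fin.sum_univ_succ, s1, s2, s3, s4]
  ring

lemma det_skew {M : Matrix (Fin 4) (Fin 4) ℂ} (hM : Mᵀ = -M) : M.det = (Pf M)^2 := by
  rw [det4, Pf, skew_diag hM 0, skew_diag hM 1, skew_diag hM 2, skew_diag hM 3,
    skew_apply hM 0 1, skew_apply hM 0 2, skew_apply hM 0 3,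
    skew_apply hM 1 2, skew_apply hM 1 3, skew_apply hM 2 3]
  ring

lemma Pf_smul_add (s t : ℂ) (M N : Matrix (Fin 4) (Fin 4) ℂ) :
    Pf (s • M + t • N) = s^2 * Pf M + s*t* Pp M N + t^2 * Pf N := by
  simp [Pf, Pp, Matrix.add_apply, Matrix.smul_apply, smul_eq_mul]
  ring

lemma Pf_add (M N : Matrix (Fin 4) (Fin 4) ℂ) :
    Pf (M + N) = Pf M + Pp M N + Pf N := by
  simp [Pf, Pp, Matrix.add_apply]; ring

lemma Pp_comm (M N : Matrix (Fin 4) (Fin 4) ℂ) : Pp M N = Pp N M := by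
  simp [Pp]; ring

lemma Pp_smul_add_left (s t : ℂ) (M N C : Matrix (Fin 4) (Fin 4) ℂ) :
    Pp (s • M + t • N) C = s * Pp M C + t * Pp N C := by
  simp [Pp, Matrix.add_apply, Matrix.smul_apply, smul_eq_mul]
  ring

lemma Pp_self (M : Matrix (Fin 4) (Fin 4) ℂ) : Pp M M = 2 * Pf M := by
  simp [Pf, Pp]; ring

lemma wedge_skew (u v : Fin 4 → ℂ) : (wedge u v)ᵀ = -(wedge u v) := by
  ext i j; simp only [wedge, Matrix.transpose_apply, Matrix.neg_apply, Matrix.of_apply]; ring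

lemma Pf_wedge (u v : Fin 4 → ℂ) : Pf (wedge u v) = 0 := by
  simp [Pf, wedge]; ring

lemma wedge_mulVec (u v x : Fin 4 → ℂ) :
    (wedge u v).mulVec x = (v ⬝ᵥ x) • u - (u ⬝ᵥ x) • v := by
  funext i
  simp [wedge, Matrix.mulVec, dotProduct, Fin.sum_univ_four, Pi.sub_apply, smul_eq_mul]
  ring

lemma wedge_form (u v x y : Fin 4 → ℂ) :
    x ⬝ᵥ (wedge u v).mulVec y = (u ⬝ᵥ x) * (v ⬝ᵥ y) - (v ⬝ᵥ x) * (u ⬝ᵥ y) := by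
  simp [wedge, Matrix.mulVec, dotProduct, Fin.sum_univ_four]
  ring


set_option maxHeartbeats 2000000 in
lemma entry_identity {M : Matrix (Fin 4) (Fin 4) ℂ} (hM : Mᵀ = -M) (hPf : Pf M = 0)
    (a b i j : Fin 4) :
    M a b * M i j = M a i * M b j - M a j * M b i := by
  have hs : ∀ p q : Fin 4, M q p = -M p q := fun p q => by
    have := congrFun (congrFun hM p) q
    simpa [Matrix.transpose_apply] using this
  have z0 : M 0 0 = 0 := by linear_combination (hs 0 0) / 2
  have z1 : M 1 1 = 0 := by linear_combination (hs 1 1) / 2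
  have z2 : M 2 2 = 0 := by linear_combination (hs 2 2) / 2
  have z3 : M 3 3 = 0 := by linear_combination (hs 3 3) / 2
  have h10 := hs 0 1; have h20 := hs 0 2; have h30 := hs 0 3
  have h21 := hs 1 2; have h31 := hs 1 3; have h32 := hs 2 3
  rw [Pf] at hPf
  have m0 : ((⟨0, by omega⟩ : Fin 4)) = 0 := rfl
  have m1 : ((⟨1, by omega⟩ : Fin 4)) = 1 := rfl
  have m2 : ((⟨2, by omega⟩ : Fin 4)) = 2 := rfl
  have m3 : ((⟨3, by omega⟩ : Fin 4)) = 3 := rfl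
  fin_cases a <;> fin_cases b <;> fin_cases i <;> fin_cases j <;>
    simp only [m0, m1, m2, m3, z0, z1, z2, z3, h10, h20, h30, h21, h31, h32] <;>
    first
      | ring1
      | linear_combination hPf
      | linear_combination -hPf



lemma exists_ne_entry {M : Matrix (Fin 4) (Fin 4) ℂ} (h : M ≠ 0) : ∃ a b, M a b ≠ 0 := by
  by_contra hc
  push_neg at hc
  exact h (by ext i j; simpa using hc i j)

lemma rank2_decomp {M : Matrix (Fin 4) (Fin 4) ℂ} (hM : Mᵀ = -M) (hPf : Pf M = 0)
    (hM0 : M ≠ 0) :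
    ∃ u v p q : Fin 4 → ℂ, M = wedge u v ∧
      u ⬝ᵥ p = 1 ∧ v ⬝ᵥ p = 0 ∧ u ⬝ᵥ q = 0 ∧ v ⬝ᵥ q = 1 := by
  obtain ⟨a, b, hab⟩ := exists_ne_entry hM0
  refine ⟨M a, (M a b)⁻¹ • M b, (M a b)⁻¹ • (Pi.single b 1 : Fin 4 → ℂ), -(Pi.single a 1 : Fin 4 → ℂ), ?_, ?_, ?_, ?_, ?_⟩
  · ext i j
    have h := entry_identity hM hPf a b i j
    simp only [wedge_apply, Pi.smul_apply, smul_eq_mul]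
    field_simp
    linear_combination h
  · rw [dotProduct_smul, dotProduct_single, smul_eq_mul]; field_simp
  · rw [smul_dotProduct, dotProduct_smul, dotProduct_single]
    simp [skew_diag hM b]
  · rw [dotProduct_neg, dotProduct_single]; simp [skew_diag hM a]
  · rw [smul_dotProduct, dotProduct_neg, dotProduct_single]
    simp [skew_apply hM a b]; field_simp

/-- Matrix with given columns. -/
def colMat (u v w z : Fin 4 → ℂ) : Matrix (Fin 4) (Fin 4) ℂ :=
  Matrix.of fun i j => ![u, v, w, z] j i

lemma Pf_wedge_add_wedge (u v w z : Fin 4 → ℂ) :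
    Pf (wedge u v + wedge w z) = (colMat u v w z).det := by
  rw [det4]
  simp only [Pf, colMat, wedge, Matrix.add_apply, Matrix.of_apply,
    Matrix.cons_val_zero, Matrix.cons_val_one, Matrix.head_cons,
    Matrix.cons_val_two, Matrix.tail_cons, Matrix.cons_val_three, Matrix.head_fin_const]
  ring

lemma wedge_eq_colMat_mul (u v w z : Fin 4 → ℂ) :
    wedge u v = colMat u v w z * skewS 0 1 * (colMat u v w z)ᵀ := by
  ext i j
  simp [mul_apply, Fin.sum_univ_four, skewS, colMat, Matrix.single,
    wedge_apply, Matrix.transpose_apply, Matrix.sub_apply]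
  ring

lemma wedge_eq_colMat_mul' (u v w z : Fin 4 → ℂ) :
    wedge w z = colMat u v w z * skewS 2 3 * (colMat u v w z)ᵀ := by
  ext i j
  simp [mul_apply, Fin.sum_univ_four, skewS, colMat, Matrix.single,
    wedge_apply, Matrix.transpose_apply, Matrix.sub_apply]
  ring

set_option maxHeartbeats 1000000 in
lemma Pf_congr {M : Matrix (Fin 4) (Fin 4) ℂ} (hM : Mᵀ = -M) (W : Matrix (Fin 4) (Fin 4) ℂ) :
    Pf (Wᵀ * M * W) = W.det * Pf M := by
  have hs : ∀ p q : Fin 4, M q p = -M p q := fun p q => skew_apply hM p q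
  rw [det4 W]
  simp only [Pf, mul_apply, Fin.sum_univ_four, Matrix.transpose_apply,
    skew_diag hM 0, skew_diag hM 1, skew_diag hM 2, skew_diag hM 3,
    hs 0 1, hs 0 2, hs 0 3, hs 1 2, hs 1 3, hs 2 3]
  ring

lemma Pp_congr {M N : Matrix (Fin 4) (Fin 4) ℂ} (hM : Mᵀ = -M) (hN : Nᵀ = -N)
    (W : Matrix (Fin 4) (Fin 4) ℂ) :
    Pp (Wᵀ * M * W) (Wᵀ * N * W) = W.det * Pp M N := by
  have hMN : (M + N)ᵀ = -(M + N) := by rw [Matrix.transpose_add, hM, hN]; abel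
  have e : Wᵀ * (M + N) * W = Wᵀ * M * W + Wᵀ * N * W := by
    rw [Matrix.mul_add, Matrix.add_mul]
  have h1 := Pf_congr hMN W
  rw [e, Pf_add] at h1
  rw [Pf_add] at h1
  rw [Pf_congr hM W, Pf_congr hN W] at h1
  linear_combination h1

lemma colMat_transpose_mulVec (u v w z x : Fin 4 → ℂ) (i : Fin 4) :
    ((colMat u v w z)ᵀ.mulVec x) i = (![u, v, w, z] i) ⬝ᵥ x := by
  fin_cases i <;>
    simp [colMat, Matrix.mulVec, dotProduct, Fin.sum_univ_four, Matrix.transpose_apply]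

lemma common_kernel {A B : Matrix (Fin 4) (Fin 4) ℂ} (hA : Aᵀ = -A) (hB : Bᵀ = -B)
    (hA0 : A ≠ 0) (hB0 : B ≠ 0)
    (hPfA : Pf A = 0) (hPfB : Pf B = 0) (hPp : Pp A B = 0) :
    ∃ x : Fin 4 → ℂ, x ≠ 0 ∧ A.mulVec x = 0 ∧ B.mulVec x = 0 := by
  obtain ⟨u, v, p, q, hAw, -, -, -, -⟩ := rank2_decomp hA hPfA hA0
  obtain ⟨w, z, p', q', hBw, -, -, -, -⟩ := rank2_decomp hB hPfB hB0
  have hdet : ((colMat u v w z)ᵀ).det = 0 := by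
    rw [Matrix.det_transpose, ← Pf_wedge_add_wedge, ← hAw, ← hBw, Pf_add, hPfA, hPfB, hPp]
    ring
  obtain ⟨x, hx0, hx⟩ := (Matrix.exists_mulVec_eq_zero_iff).mpr hdet
  have hu : u ⬝ᵥ x = 0 := by
    have := congrFun hx 0
    rwa [colMat_transpose_mulVec] at this
  have hv : v ⬝ᵥ x = 0 := by
    have := congrFun hx 1
    rwa [colMat_transpose_mulVec] at this
  have hw : w ⬝ᵥ x = 0 := by
    have := congrFun hx 2
    rwa [colMat_transpose_mulVec] at this
  have hz : z ⬝ᵥ x = 0 := by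
    have := congrFun hx 3
    rwa [colMat_transpose_mulVec] at this
  refine ⟨x, hx0, ?_, ?_⟩
  · rw [hAw, wedge_mulVec, hu, hv]; simp
  · rw [hBw, wedge_mulVec, hw, hz]; simp

lemma basis_change {A B A' B' : Matrix (Fin 4) (Fin 4) ℂ}
    (hind : LinearIndependent ℂ ![A, B]) (α β γ δ : ℂ)
    (hAd : A' = α • A + β • B) (hBd : B' = γ • A + δ • B)
    (hd : α * δ - β * γ ≠ 0) :
    Submodule.span ℂ ({A', B'} : Set (Matrix (Fin 4) (Fin 4) ℂ))
      = Submodule.span ℂ ({A, B} : Set (Matrix (Fin 4) (Fin 4) ℂ)) ∧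
    LinearIndependent ℂ ![A', B'] := by
  constructor
  · apply le_antisymm
    · rw [Submodule.span_le]
      rintro X (rfl | rfl)
      · exact Submodule.mem_span_pair.mpr ⟨α, β, hAd.symm⟩
      · exact Submodule.mem_span_pair.mpr ⟨γ, δ, hBd.symm⟩
    · rw [Submodule.span_le]
      rintro X (rfl | rfl)
      · refine Submodule.mem_span_pair.mpr ⟨δ / (α * δ - β * γ), -β / (α * δ - β * γ), ?_⟩
        rw [hAd, hBd]
        ext i j
        simp only [Matrix.add_apply, Matrix.smul_apply, smul_eq_mul]
        rw [div_mul_eq_mul_div, div_mul_eq_mul_div, ← add_div, div_eq_iff hd]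
        ring
      · refine Submodule.mem_span_pair.mpr ⟨-γ / (α * δ - β * γ), α / (α * δ - β * γ), ?_⟩
        rw [hAd, hBd]
        ext i j
        simp only [Matrix.add_apply, Matrix.smul_apply, smul_eq_mul]
        rw [div_mul_eq_mul_div, div_mul_eq_mul_div, ← add_div, div_eq_iff hd]
        ring
  · rw [LinearIndependent.pair_iff]
    intro s t hst
    have h2 : (s * α + t * γ) • A + (s * β + t * δ) • B = 0 := by
      rw [hAd, hBd] at hst
      rw [← hst]
      ext i j
      simp only [Matrix.add_apply, Matrix.smul_apply, smul_eq_mul, Matrix.zero_apply]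
      ring
    obtain ⟨h3, h4⟩ := LinearIndependent.pair_iff.mp hind _ _ h2
    have hs : s * (α * δ - β * γ) = 0 := by linear_combination δ * h3 - γ * h4
    have ht : t * (α * δ - β * γ) = 0 := by linear_combination α * h4 - β * h3
    exact ⟨(mul_eq_zero.mp hs).resolve_right hd, (mul_eq_zero.mp ht).resolve_right hd⟩

lemma case_distinct {A' B' : Matrix (Fin 4) (Fin 4) ℂ}
    (hA' : A'ᵀ = -A') (hB' : B'ᵀ = -B') (hA0 : A' ≠ 0) (hB0 : B' ≠ 0)
    (hPfA : Pf A' = 0) (hPfB : Pf B' = 0) (hPp : Pp A' B' ≠ 0) :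
    ∃ X : Matrix (Fin 4) (Fin 4) ℂ,
      IsUnit X ∧ X * A' * Xᵀ = skewS 0 1 ∧ X * B' * Xᵀ = skewS 2 3 := by
  obtain ⟨u, v, p, q, hAw, -, -, -, -⟩ := rank2_decomp hA' hPfA hA0
  obtain ⟨w, z, p', q', hBw, -, -, -, -⟩ := rank2_decomp hB' hPfB hB0
  set Y := colMat u v w z with hY
  have hYdet : Y.det ≠ 0 := by
    rw [← Pf_wedge_add_wedge, ← hAw, ← hBw, Pf_add, hPfA, hPfB]
    simpa using hPp
  have hUnit : IsUnit Y.det := isUnit_iff_ne_zero.mpr hYdet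
  have h1 : Y⁻¹ * Y = 1 := Matrix.nonsing_inv_mul Y hUnit
  have h2 : Yᵀ * (Y⁻¹)ᵀ = 1 := by
    rw [Matrix.transpose_nonsing_inv]
    exact Matrix.mul_nonsing_inv Yᵀ (by rwa [Matrix.det_transpose])
  refine ⟨Y⁻¹, ?_, ?_, ?_⟩
  · rw [Matrix.isUnit_iff_isUnit_det, Matrix.det_nonsing_inv]
    exact isUnit_iff_ne_zero.mpr (by simp [Ring.inverse_eq_inv', inv_ne_zero hYdet])
  · rw [hAw, wedge_eq_colMat_mul u v w z, ← hY,
      show Y⁻¹ * (Y * skewS 0 1 * Yᵀ) * (Y⁻¹)ᵀ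
        = (Y⁻¹ * Y) * skewS 0 1 * (Yᵀ * (Y⁻¹)ᵀ) by simp [Matrix.mul_assoc],
      h1, h2, Matrix.one_mul, Matrix.mul_one]
  · rw [hBw, wedge_eq_colMat_mul' u v w z, ← hY,
      show Y⁻¹ * (Y * skewS 2 3 * Yᵀ) * (Y⁻¹)ᵀ
        = (Y⁻¹ * Y) * skewS 2 3 * (Yᵀ * (Y⁻¹)ᵀ) by simp [Matrix.mul_assoc],
      h1, h2, Matrix.one_mul, Matrix.mul_one]

lemma colMat_gram (M : Matrix (Fin 4) (Fin 4) ℂ) (a b c d : Fin 4 → ℂ) (i j : Fin 4) :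
    ((colMat a b c d)ᵀ * M * colMat a b c d) i j
      = (![a, b, c, d] i) ⬝ᵥ M.mulVec (![a, b, c, d] j) := by
  simp only [colMat, mul_apply, Fin.sum_univ_four, Matrix.transpose_apply, Matrix.of_apply,
    Matrix.mulVec, dotProduct]
  ring

lemma rowMat_gram (M : Matrix (Fin 4) (Fin 4) ℂ) (a b c d : Fin 4 → ℂ) (i j : Fin 4) :
    (Matrix.of ![a, b, c, d] * M * (Matrix.of ![a, b, c, d])ᵀ) i j
      = (![a, b, c, d] i) ⬝ᵥ M.mulVec (![a, b, c, d] j) := by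
  simp only [mul_apply, Fin.sum_univ_four, Matrix.transpose_apply, Matrix.of_apply,
    Matrix.mulVec, dotProduct]
  ring

lemma rowMat_mulVec (a b c d x : Fin 4 → ℂ) (i : Fin 4) :
    ((Matrix.of ![a, b, c, d]).mulVec x) i = (![a, b, c, d] i) ⬝ᵥ x := rfl

lemma bform_skew {B' : Matrix (Fin 4) (Fin 4) ℂ} (hB' : B'ᵀ = -B') (x y : Fin 4 → ℂ) :
    y ⬝ᵥ B'.mulVec x = -(x ⬝ᵥ B'.mulVec y) := by
  have hBk : B' = -B'ᵀ := by rw [hB']; simp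
  calc y ⬝ᵥ B'.mulVec x = y ⬝ᵥ (-B'ᵀ).mulVec x := by rw [← hBk]
    _ = -(y ⬝ᵥ B'ᵀ.mulVec x) := by rw [Matrix.neg_mulVec, dotProduct_neg]
    _ = -((x ᵥ* B') ⬝ᵥ y) := by rw [Matrix.mulVec_transpose, dotProduct_comm]
    _ = -(x ⬝ᵥ B'.mulVec y) := by rw [← Matrix.dotProduct_mulVec]

set_option maxHeartbeats 4000000 in
lemma case_double {A' B' : Matrix (Fin 4) (Fin 4) ℂ}
    (hA' : A'ᵀ = -A') (hB' : B'ᵀ = -B') (hA0 : A' ≠ 0)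
    (hPfA : Pf A' = 0) (hPp : Pp A' B' = 0) (hPfB : Pf B' ≠ 0) :
    ∃ X : Matrix (Fin 4) (Fin 4) ℂ,
      IsUnit X ∧ X * A' * Xᵀ = skewS 1 3 ∧ X * B' * Xᵀ = skewS 0 3 + skewS 1 2 := by
  obtain ⟨u, v, p, q, hAw, hup, hvp, huq, hvq⟩ := rank2_decomp hA' hPfA hA0
  have hdetB : B'.det ≠ 0 := by rw [det_skew hB']; exact pow_ne_zero 2 hPfB
  have hbself : ∀ x : Fin 4 → ℂ, x ⬝ᵥ B'.mulVec x = 0 := by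
    intro x
    have h := bform_skew hB' x x
    linear_combination h / 2
  -- the restriction of the B'-form to the kernel of A' vanishes
  have CK : ∀ k1 k2 : Fin 4 → ℂ, u ⬝ᵥ k1 = 0 → v ⬝ᵥ k1 = 0 → u ⬝ᵥ k2 = 0 → v ⬝ᵥ k2 = 0 →
      k1 ⬝ᵥ B'.mulVec k2 = 0 := by
    intro k1 k2 h1 h2 h3 h4
    have hcong := Pp_congr hA' hB' (colMat p q k1 k2)
    rw [hPp, mul_zero] at hcong
    have ga : ∀ i j : Fin 4, ((colMat p q k1 k2)ᵀ * A' * colMat p q k1 k2) i j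
        = (u ⬝ᵥ ![p, q, k1, k2] i) * (v ⬝ᵥ ![p, q, k1, k2] j)
          - (v ⬝ᵥ ![p, q, k1, k2] i) * (u ⬝ᵥ ![p, q, k1, k2] j) := by
      intro i j; rw [colMat_gram, hAw, wedge_form]
    have gb : ∀ i j : Fin 4, ((colMat p q k1 k2)ᵀ * B' * colMat p q k1 k2) i j
        = (![p, q, k1, k2] i) ⬝ᵥ B'.mulVec (![p, q, k1, k2] j) :=
      fun i j => colMat_gram B' p q k1 k2 i j
    simp only [Pp, ga, gb, Matrix.cons_val_zero, Matrix.cons_val_one, Matrix.head_cons,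
      Matrix.cons_val_two, Matrix.tail_cons, Matrix.cons_val_three, Matrix.head_fin_const,
      hup, hvp, huq, hvq, h1, h2, h3, h4] at hcong
    linear_combination hcong
  -- an auxiliary nonzero vector in the kernel of A'
  obtain ⟨k0, hk00, hk0u, hk0v⟩ :
      ∃ k0 : Fin 4 → ℂ, k0 ≠ 0 ∧ u ⬝ᵥ k0 = 0 ∧ v ⬝ᵥ k0 = 0 := by
    have hrdet : (Matrix.of ![u, v, (0 : Fin 4 → ℂ), (0 : Fin 4 → ℂ)]).det = 0 :=
      Matrix.det_eq_zero_of_row_eq_zero 2 (fun j => rfl)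
    obtain ⟨x, hx0, hx⟩ := Matrix.exists_mulVec_eq_zero_iff.mpr hrdet
    refine ⟨x, hx0, ?_, ?_⟩
    · have h := congrFun hx 0; rw [rowMat_mulVec] at h; simpa using h
    · have h := congrFun hx 1; rw [rowMat_mulVec] at h; simpa using h
  -- projection to the kernel of A'
  have hpiu : ∀ x : Fin 4 → ℂ, u ⬝ᵥ (x - (u ⬝ᵥ x) • p - (v ⬝ᵥ x) • q) = 0 := by
    intro x
    rw [dotProduct_sub, dotProduct_sub, dotProduct_smul, dotProduct_smul, hup, huq]
    simp
  have hpiv : ∀ x : Fin 4 → ℂ, v ⬝ᵥ (x - (u ⬝ᵥ x) • p - (v ⬝ᵥ x) • q) = 0 := by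
    intro x
    rw [dotProduct_sub, dotProduct_sub, dotProduct_smul, dotProduct_smul, hvp, hvq]
    simp
  have hdecomp : ∀ x : Fin 4 → ℂ,
      x = (u ⬝ᵥ x) • p + (v ⬝ᵥ x) • q + (x - (u ⬝ᵥ x) • p - (v ⬝ᵥ x) • q) := by
    intro x; abel
  -- there is a kernel vector k on which the form pairs nontrivially with p or q
  obtain ⟨k, hku, hkv, hkB⟩ : ∃ k : Fin 4 → ℂ, u ⬝ᵥ k = 0 ∧ v ⬝ᵥ k = 0 ∧
      ¬(p ⬝ᵥ B'.mulVec k = 0 ∧ q ⬝ᵥ B'.mulVec k = 0) := by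
    by_contra hcon
    push_neg at hcon
    have hall : ∀ x : Fin 4 → ℂ, x ⬝ᵥ B'.mulVec k0 = 0 := by
      intro x
      have hpq := hcon k0 hk0u hk0v
      calc x ⬝ᵥ B'.mulVec k0
          = ((u ⬝ᵥ x) • p + (v ⬝ᵥ x) • q + (x - (u ⬝ᵥ x) • p - (v ⬝ᵥ x) • q)) ⬝ᵥ B'.mulVec k0 := by
            rw [← hdecomp x]
        _ = (u ⬝ᵥ x) * (p ⬝ᵥ B'.mulVec k0) + (v ⬝ᵥ x) * (q ⬝ᵥ B'.mulVec k0)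
            + ((x - (u ⬝ᵥ x) • p - (v ⬝ᵥ x) • q) ⬝ᵥ B'.mulVec k0) := by
            rw [add_dotProduct, add_dotProduct, smul_dotProduct, smul_dotProduct]
            simp
        _ = 0 := by
            rw [hpq.1, hpq.2, CK _ k0 (hpiu x) (hpiv x) hk0u hk0v]
            ring
    have hBk0 : B'.mulVec k0 = 0 := by
      funext i
      have h := hall (Pi.single i 1)
      rwa [single_dotProduct, one_mul] at h
    exact hdetB (Matrix.exists_mulVec_eq_zero_iff.mp ⟨k0, hk00, hBk0⟩)
  -- fix r1 = p + t1 k, r3 = q + t3 k with the form vanishing on (r1, r3)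
  have hexp : ∀ (x : Fin 4 → ℂ) (t : ℂ) (y z : Fin 4 → ℂ),
      x ⬝ᵥ B'.mulVec (y + t • z) = x ⬝ᵥ B'.mulVec y + t * (x ⬝ᵥ B'.mulVec z) := by
    intro x t y z
    rw [Matrix.mulVec_add, Matrix.mulVec_smul, dotProduct_add, dotProduct_smul]
    simp
  have hexp' : ∀ (t : ℂ) (y z w : Fin 4 → ℂ),
      (y + t • z) ⬝ᵥ B'.mulVec w = y ⬝ᵥ B'.mulVec w + t * (z ⬝ᵥ B'.mulVec w) := by
    intro t y z w
    rw [add_dotProduct, smul_dotProduct]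
    simp
  obtain ⟨t1, t3, hb13⟩ : ∃ t1 t3 : ℂ,
      (p + t1 • k) ⬝ᵥ B'.mulVec (q + t3 • k) = 0 := by
    rcases not_and_or.mp hkB with hpk | hqk
    · refine ⟨0, -(p ⬝ᵥ B'.mulVec q) / (p ⬝ᵥ B'.mulVec k), ?_⟩
      rw [hexp', hexp, hexp]
      field_simp
      ring
    · refine ⟨(p ⬝ᵥ B'.mulVec q) / (q ⬝ᵥ B'.mulVec k), 0, ?_⟩
      have hkq : k ⬝ᵥ B'.mulVec q = -(q ⬝ᵥ B'.mulVec k) := bform_skew hB' q k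
      rw [hexp, hexp', hexp']
      rw [hkq]
      field_simp
      ring
  set r1 : Fin 4 → ℂ := p + t1 • k with hr1
  set r3 : Fin 4 → ℂ := q + t3 • k with hr3
  have hur1 : u ⬝ᵥ r1 = 1 := by rw [hr1, dotProduct_add, dotProduct_smul, hup, hku]; simp
  have hvr1 : v ⬝ᵥ r1 = 0 := by rw [hr1, dotProduct_add, dotProduct_smul, hvp, hkv]; simp
  have hur3 : u ⬝ᵥ r3 = 0 := by rw [hr3, dotProduct_add, dotProduct_smul, huq, hku]; simp
  have hvr3 : v ⬝ᵥ r3 = 1 := by rw [hr3, dotProduct_add, dotProduct_smul, hvq, hkv]; simp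
  -- the matrix R used to solve for r0 and r2
  have hRdet : (Matrix.of ![u, v, B'.mulVec r1, B'.mulVec r3]).det ≠ 0 := by
    intro h
    obtain ⟨x, hx0, hx⟩ := Matrix.exists_mulVec_eq_zero_iff.mpr h
    have hxu : u ⬝ᵥ x = 0 := by have h' := congrFun hx 0; rw [rowMat_mulVec] at h'; simpa using h'
    have hxv : v ⬝ᵥ x = 0 := by have h' := congrFun hx 1; rw [rowMat_mulVec] at h'; simpa using h'
    have hxr1 : x ⬝ᵥ B'.mulVec r1 = 0 := by
      have h' := congrFun hx 2; rw [rowMat_mulVec] at h'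
      simp only [Matrix.cons_val_two, Matrix.tail_cons, Matrix.head_cons] at h'
      rw [dotProduct_comm] at h'; exact h'
    have hxr3 : x ⬝ᵥ B'.mulVec r3 = 0 := by
      have h' := congrFun hx 3; rw [rowMat_mulVec] at h'
      simp only [Matrix.cons_val_three, Matrix.tail_cons, Matrix.head_fin_const] at h'
      rw [dotProduct_comm] at h'; exact h'
    have hxp : x ⬝ᵥ B'.mulVec p = 0 := by
      have h' : x ⬝ᵥ B'.mulVec r1 = x ⬝ᵥ B'.mulVec p + t1 * (x ⬝ᵥ B'.mulVec k) := by
        rw [hr1, hexp]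
      rw [hxr1, CK x k hxu hxv hku hkv] at h'
      linear_combination -h'
    have hxq : x ⬝ᵥ B'.mulVec q = 0 := by
      have h' : x ⬝ᵥ B'.mulVec r3 = x ⬝ᵥ B'.mulVec q + t3 * (x ⬝ᵥ B'.mulVec k) := by
        rw [hr3, hexp]
      rw [hxr3, CK x k hxu hxv hku hkv] at h'
      linear_combination -h'
    have hally : ∀ y : Fin 4 → ℂ, x ⬝ᵥ B'.mulVec y = 0 := by
      intro y
      calc x ⬝ᵥ B'.mulVec y
          = x ⬝ᵥ B'.mulVec ((u ⬝ᵥ y) • p + (v ⬝ᵥ y) • q + (y - (u ⬝ᵥ y) • p - (v ⬝ᵥ y) • q)) := by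
            rw [← hdecomp y]
        _ = (u ⬝ᵥ y) * (x ⬝ᵥ B'.mulVec p) + (v ⬝ᵥ y) * (x ⬝ᵥ B'.mulVec q)
            + (x ⬝ᵥ B'.mulVec (y - (u ⬝ᵥ y) • p - (v ⬝ᵥ y) • q)) := by
            rw [Matrix.mulVec_add, Matrix.mulVec_add, Matrix.mulVec_smul, Matrix.mulVec_smul,
              dotProduct_add, dotProduct_add, dotProduct_smul, dotProduct_smul]
            simp
        _ = 0 := by
            rw [hxp, hxq, CK x _ hxu hxv (hpiu y) (hpiv y)]
            ring
    have hvm : x ᵥ* B' = 0 := by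
      funext j
      have h' := hally (Pi.single j 1)
      rw [Matrix.dotProduct_mulVec, dotProduct_single, mul_one] at h'
      exact h'
    exact hdetB (Matrix.exists_vecMul_eq_zero_iff.mp ⟨x, hx0, hvm⟩)
  have hRunit : IsUnit (Matrix.of ![u, v, B'.mulVec r1, B'.mulVec r3]).det :=
    isUnit_iff_ne_zero.mpr hRdet
  set R : Matrix (Fin 4) (Fin 4) ℂ := Matrix.of ![u, v, B'.mulVec r1, B'.mulVec r3] with hR
  set r0 : Fin 4 → ℂ := R⁻¹.mulVec ![0, 0, 0, 1] with hr0
  set r2 : Fin 4 → ℂ := R⁻¹.mulVec ![0, 0, -1, 0] with hr2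
  have hRr0 : R.mulVec r0 = ![0, 0, 0, 1] := by
    rw [hr0, Matrix.mulVec_mulVec, Matrix.mul_nonsing_inv _ hRunit, Matrix.one_mulVec]
  have hRr2 : R.mulVec r2 = ![0, 0, -1, 0] := by
    rw [hr2, Matrix.mulVec_mulVec, Matrix.mul_nonsing_inv _ hRunit, Matrix.one_mulVec]
  have hur0 : u ⬝ᵥ r0 = 0 := by have h := congrFun hRr0 0; rw [hR, rowMat_mulVec] at h; simpa using h
  have hvr0 : v ⬝ᵥ r0 = 0 := by have h := congrFun hRr0 1; rw [hR, rowMat_mulVec] at h; simpa using h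
  have hb01 : r0 ⬝ᵥ B'.mulVec r1 = 0 := by
    have h := congrFun hRr0 2; rw [hR, rowMat_mulVec] at h
    simp only [Matrix.cons_val_two, Matrix.tail_cons, Matrix.head_cons] at h
    rw [dotProduct_comm] at h; simpa using h
  have hb03 : r0 ⬝ᵥ B'.mulVec r3 = 1 := by
    have h := congrFun hRr0 3; rw [hR, rowMat_mulVec] at h
    simp only [Matrix.cons_val_three, Matrix.tail_cons, Matrix.head_fin_const] at h
    rw [dotProduct_comm] at h; simpa using h
  have hur2 : u ⬝ᵥ r2 = 0 := by have h := congrFun hRr2 0; rw [hR, rowMat_mulVec] at h; simpa using h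
  have hvr2 : v ⬝ᵥ r2 = 0 := by have h := congrFun hRr2 1; rw [hR, rowMat_mulVec] at h; simpa using h
  have hb21 : r2 ⬝ᵥ B'.mulVec r1 = -1 := by
    have h := congrFun hRr2 2; rw [hR, rowMat_mulVec] at h
    simp only [Matrix.cons_val_two, Matrix.tail_cons, Matrix.head_cons] at h
    rw [dotProduct_comm] at h; simpa using h
  have hb23 : r2 ⬝ᵥ B'.mulVec r3 = 0 := by
    have h := congrFun hRr2 3; rw [hR, rowMat_mulVec] at h
    simp only [Matrix.cons_val_three, Matrix.tail_cons, Matrix.head_fin_const] at h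
    rw [dotProduct_comm] at h; simpa using h
  have hb02 : r0 ⬝ᵥ B'.mulVec r2 = 0 := CK r0 r2 hur0 hvr0 hur2 hvr2
  -- remaining form values by skewness
  have hb10 : r1 ⬝ᵥ B'.mulVec r0 = 0 := by rw [bform_skew hB' r0 r1, hb01]; ring
  have hb30 : r3 ⬝ᵥ B'.mulVec r0 = -1 := by rw [bform_skew hB' r0 r3, hb03]
  have hb20 : r2 ⬝ᵥ B'.mulVec r0 = 0 := by rw [bform_skew hB' r0 r2, hb02]; ring
  have hb12 : r1 ⬝ᵥ B'.mulVec r2 = 1 := by rw [bform_skew hB' r2 r1, hb21]; ring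
  have hb31 : r3 ⬝ᵥ B'.mulVec r1 = 0 := by rw [bform_skew hB' r1 r3, hb13]; ring
  have hb32 : r3 ⬝ᵥ B'.mulVec r2 = 0 := by rw [bform_skew hB' r2 r3, hb23]; ring
  -- the congruence matrix X
  have hXdet : (Matrix.of ![r0, r1, r2, r3]).det ≠ 0 := by
    intro h
    rw [← Matrix.det_transpose] at h
    obtain ⟨c, hc0, hc⟩ := Matrix.exists_mulVec_eq_zero_iff.mpr h
    have hw : c 0 • r0 + c 1 • r1 + c 2 • r2 + c 3 • r3 = 0 := by
      funext j
      have h' := congrFun hc j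
      simp only [Matrix.mulVec, dotProduct, Fin.sum_univ_four, Matrix.transpose_apply,
        Matrix.of_apply, Matrix.cons_val_zero, Matrix.cons_val_one, Matrix.head_cons,
        Matrix.cons_val_two, Matrix.tail_cons, Matrix.cons_val_three, Matrix.head_fin_const,
        Pi.zero_apply] at h'
      simp only [Pi.add_apply, Pi.smul_apply, smul_eq_mul, Pi.zero_apply]
      linear_combination h'
    have e1 : c 1 = 0 := by
      have h' := congrArg (fun w => u ⬝ᵥ w) hw
      simpa [dotProduct_add, dotProduct_smul, hur0, hur1, hur2, hur3] using h'
    have e3 : c 3 = 0 := by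
      have h' := congrArg (fun w => v ⬝ᵥ w) hw
      simpa [dotProduct_add, dotProduct_smul, hvr0, hvr1, hvr2, hvr3] using h'
    have e0 : c 0 = 0 := by
      have h' := congrArg (fun w => w ⬝ᵥ B'.mulVec r3) hw
      simpa [add_dotProduct, smul_dotProduct, hb03, hb13, hb23, hbself] using h'
    have e2 : c 2 = 0 := by
      have h' := congrArg (fun w => w ⬝ᵥ B'.mulVec r1) hw
      have h'' : c 0 * (r0 ⬝ᵥ B'.mulVec r1) + c 1 * (r1 ⬝ᵥ B'.mulVec r1)
          + c 2 * (r2 ⬝ᵥ B'.mulVec r1) + c 3 * (r3 ⬝ᵥ B'.mulVec r1) = 0 := by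
        simpa [add_dotProduct, smul_dotProduct] using h'
      rw [hb01, hb21, hb31, hbself] at h''
      linear_combination -h''
    apply hc0
    funext i
    fin_cases i
    · exact e0
    · exact e1
    · exact e2
    · exact e3
  refine ⟨Matrix.of ![r0, r1, r2, r3],
    (Matrix.isUnit_iff_isUnit_det _).mpr (isUnit_iff_ne_zero.mpr hXdet), ?_, ?_⟩
  · ext i j
    rw [rowMat_gram, hAw]
    fin_cases i <;> fin_cases j <;>
      simp [wedge_form, hur0, hur1, hur2, hur3, hvr0, hvr1, hvr2, hvr3,
        skewS, Matrix.single, Matrix.sub_apply]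
  · ext i j
    rw [rowMat_gram]
    fin_cases i <;> fin_cases j <;>
      simp [hb01, hb02, hb03, hb10, hb12, hb13, hb20, hb21, hb23, hb30, hb31, hb32, hbself,
        skewS, Matrix.single, Matrix.sub_apply, Matrix.add_apply]

lemma skew_smul_add {M N : Matrix (Fin 4) (Fin 4) ℂ} (hM : Mᵀ = -M) (hN : Nᵀ = -N)
    (s t : ℂ) : (s • M + t • N)ᵀ = -(s • M + t • N) := by
  rw [Matrix.transpose_add, Matrix.transpose_smul, Matrix.transpose_smul, hM, hN]
  ext i j
  simp [Matrix.add_apply, Matrix.neg_apply, Matrix.smul_apply]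
  ring

end PencilAux

open PencilAux

theorem stmt0 (A B : Matrix (Fin 4) (Fin 4) ℂ)
    (hA : Aᵀ = -A) (hB : Bᵀ = -B)
    (hind : LinearIndependent ℂ ![A, B])
    (hker : ∀ x : Fin 4 → ℂ, A.mulVec x = 0 → B.mulVec x = 0 → x = 0) :
    ∃ X A' B' : Matrix (Fin 4) (Fin 4) ℂ,
      IsUnit X ∧
      Submodule.span ℂ ({A', B'} : Set (Matrix (Fin 4) (Fin 4) ℂ))
        = Submodule.span ℂ ({A, B} : Set (Matrix (Fin 4) (Fin 4) ℂ)) ∧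
      LinearIndependent ℂ ![A', B'] ∧
      ((X * A' * Xᵀ = skewS 0 1 ∧ X * B' * Xᵀ = skewS 2 3) ∨
       (X * A' * Xᵀ = skewS 1 3 ∧ X * B' * Xᵀ = skewS 0 3 + skewS 1 2)) := by
  classical
  have hA0 : A ≠ 0 := by have h := hind.ne_zero 0; simpa using h
  have hB0 : B ≠ 0 := by have h := hind.ne_zero 1; simpa using h
  -- if both generators of a basis of the pencil have zero Pfaffian,
  -- the polar form cannot vanish as well
  have key : ∀ A₁ B₁ : Matrix (Fin 4) (Fin 4) ℂ, A₁ᵀ = -A₁ → B₁ᵀ = -B₁ →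
      A₁ ≠ 0 → B₁ ≠ 0 →
      Submodule.span ℂ ({A₁, B₁} : Set (Matrix (Fin 4) (Fin 4) ℂ))
        = Submodule.span ℂ ({A, B} : Set (Matrix (Fin 4) (Fin 4) ℂ)) →
      Pf A₁ = 0 → Pf B₁ = 0 → Pp A₁ B₁ ≠ 0 := by
    intro A₁ B₁ h1 h2 h3 h4 hspan hp1 hp2 hPp0
    obtain ⟨x, hx0, hxA, hxB⟩ := common_kernel h1 h2 h3 h4 hp1 hp2 hPp0
    have hmem : ∀ C : Matrix (Fin 4) (Fin 4) ℂ,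
        C ∈ Submodule.span ℂ ({A₁, B₁} : Set (Matrix (Fin 4) (Fin 4) ℂ)) →
        C.mulVec x = 0 := by
      intro C hC
      obtain ⟨s, t, hst⟩ := Submodule.mem_span_pair.mp hC
      rw [← hst, Matrix.add_mulVec, Matrix.smul_mulVec, Matrix.smul_mulVec,
        hxA, hxB]
      simp
    have hAx : A.mulVec x = 0 := hmem A (by rw [hspan]; exact Submodule.subset_span (by simp))
    have hBx : B.mulVec x = 0 := hmem B (by rw [hspan]; exact Submodule.subset_span (by simp))
    exact hx0 (hker x hAx hBx)
  by_cases hΔ : Pp A B ^ 2 - 4 * Pf A * Pf B = 0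
  · -- double root case
    by_cases hc : Pf B = 0
    · have hb0 : Pp A B = 0 := by
        have : Pp A B ^ 2 = 0 := by linear_combination hΔ + 4 * Pf A * hc
        exact pow_eq_zero_iff (by norm_num) |>.mp this
      by_cases ha : Pf A = 0
      · exact absurd hb0 (key A B hA hB hA0 hB0 rfl ha hc)
      · -- A' = B, B' = A
        obtain ⟨hspan, hind'⟩ := basis_change hind 0 1 1 0
          (by rw [zero_smul, one_smul, zero_add]) (by rw [one_smul, zero_smul, add_zero])
          (by norm_num)
        have hPp' : Pp B A = 0 := by rw [Pp_comm]; exact hb0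
        obtain ⟨X, hX, h1, h2⟩ := case_double hB hA hB0 hc hPp' ha
        exact ⟨X, B, A, hX, hspan, hind', Or.inr ⟨h1, h2⟩⟩
    · -- A' = (2c)A - bB, B' = B
      obtain ⟨hspan, hind'⟩ := basis_change hind (2 * Pf B) (-(Pp A B)) 0 1
        rfl (by rw [zero_smul, one_smul, zero_add]) (by simpa using hc)
      have hA's : ((2 * Pf B) • A + (-(Pp A B)) • B)ᵀ
          = -((2 * Pf B) • A + (-(Pp A B)) • B) := skew_smul_add hA hB _ _
      have hA'0 : (2 * Pf B) • A + (-(Pp A B)) • B ≠ 0 := hind'.ne_zero 0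
      have hPfA' : Pf ((2 * Pf B) • A + (-(Pp A B)) • B) = 0 := by
        rw [Pf_smul_add]
        linear_combination (-(Pf B)) * hΔ
      have hPp' : Pp ((2 * Pf B) • A + (-(Pp A B)) • B) B = 0 := by
        rw [Pp_smul_add_left, Pp_self]
        ring
      obtain ⟨X, hX, h1, h2⟩ := case_double hA's hB hA'0 hPfA' hPp' hc
      exact ⟨X, _, B, hX, hspan, hind', Or.inr ⟨h1, h2⟩⟩
  · -- two distinct roots
    by_cases ha : Pf A = 0
    · -- A' = A, B' = (-c)A + bB
      have hb : Pp A B ≠ 0 := by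
        intro h; exact hΔ (by rw [h, ha]; ring)
      obtain ⟨hspan, hind'⟩ := basis_change hind 1 0 (-(Pf B)) (Pp A B)
        (by rw [one_smul, zero_smul, add_zero]) rfl (by simpa using hb)
      have hB's : ((-(Pf B)) • A + (Pp A B) • B)ᵀ
          = -((-(Pf B)) • A + (Pp A B) • B) := skew_smul_add hA hB _ _
      have hB'0 : (-(Pf B)) • A + (Pp A B) • B ≠ 0 := hind'.ne_zero 1
      have hPfB' : Pf ((-(Pf B)) • A + (Pp A B) • B) = 0 := by
        rw [Pf_smul_add]
        linear_combination (Pf B) ^ 2 * ha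
      have hPp' : Pp A _ ≠ 0 := key A _ hA hB's hA0 hB'0 hspan ha hPfB'
      obtain ⟨X, hX, h1, h2⟩ := case_distinct hA hB's hA0 hB'0 ha hPfB' hPp'
      exact ⟨X, A, _, hX, hspan, hind', Or.inl ⟨h1, h2⟩⟩
    · -- a ≠ 0 : two roots of the quadratic
      obtain ⟨d, hd⟩ : ∃ d : ℂ, d ^ 2 = Pp A B ^ 2 - 4 * Pf A * Pf B :=
        IsAlgClosed.exists_pow_nat_eq (Pp A B ^ 2 - 4 * Pf A * Pf B) (by norm_num : 0 < 2)
      have hd0 : d ≠ 0 := by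
        intro h; apply hΔ; rw [← hd, h]; ring
      have hdet : (-(Pp A B) + d) * (2 * Pf A) - (2 * Pf A) * (-(Pp A B) - d) ≠ 0 := by
        have : (-(Pp A B) + d) * (2 * Pf A) - (2 * Pf A) * (-(Pp A B) - d)
            = 4 * Pf A * d := by ring
        rw [this]
        exact mul_ne_zero (mul_ne_zero (by norm_num) ha) hd0
      obtain ⟨hspan, hind'⟩ := basis_change hind (-(Pp A B) + d) (2 * Pf A)
        (-(Pp A B) - d) (2 * Pf A) rfl rfl hdet
      have hA's : ((-(Pp A B) + d) • A + (2 * Pf A) • B)ᵀ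
          = -((-(Pp A B) + d) • A + (2 * Pf A) • B) := skew_smul_add hA hB _ _
      have hB's : ((-(Pp A B) - d) • A + (2 * Pf A) • B)ᵀ
          = -((-(Pp A B) - d) • A + (2 * Pf A) • B) := skew_smul_add hA hB _ _
      have hA'0 : (-(Pp A B) + d) • A + (2 * Pf A) • B ≠ 0 := hind'.ne_zero 0
      have hB'0 : (-(Pp A B) - d) • A + (2 * Pf A) • B ≠ 0 := hind'.ne_zero 1
      have hPfA' : Pf ((-(Pp A B) + d) • A + (2 * Pf A) • B) = 0 := by
        rw [Pf_smul_add]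
        linear_combination (Pf A) * hd
      have hPfB' : Pf ((-(Pp A B) - d) • A + (2 * Pf A) • B) = 0 := by
        rw [Pf_smul_add]
        linear_combination (Pf A) * hd
      have hPp' : Pp _ _ ≠ 0 := key _ _ hA's hB's hA'0 hB'0 hspan hPfA' hPfB'
      obtain ⟨X, hX, h1, h2⟩ := case_distinct hA's hB's hA'0 hB'0 hPfA' hPfB' hPp'
      exact ⟨X, _, _, hX, hspan, hind', Or.inl ⟨h1, h2⟩⟩
end

section
/- Let A and B be skew-symmetric 5×5 complex matrices such that ker A ∩ ker B = {0} and every nonzero element μA + λB (with (μ,λ) ≠ (0,0)) of the pencil has rank at least 4. Then there exist an invertible 5×5 complex matrix X and a basis (A', B') of the span of A and B such that X A' Xᵀ = S₂₅ + S₃₄ and X B' Xᵀ = S₁₅ + S₂₄ (a single 5×5 Kronecker block). -/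
open Matrix

set_option maxRecDepth 4000

noncomputable section

lemma skew_pair {n : ℕ} {M : Matrix (Fin n) (Fin n) ℂ} (hM : Mᵀ = -M) (x y : Fin n → ℂ) :
    x ⬝ᵥ M.mulVec y = -(y ⬝ᵥ M.mulVec x) := by
  have hM' : M = -Mᵀ := by rw [hM, neg_neg]
  rw [dotProduct_mulVec]
  conv_lhs => rw [hM', vecMul_neg, vecMul_transpose]
  rw [neg_dotProduct, dotProduct_comm]

lemma skew_self {n : ℕ} {M : Matrix (Fin n) (Fin n) ℂ} (hM : Mᵀ = -M) (x : Fin n → ℂ) :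
    x ⬝ᵥ M.mulVec x = 0 := by
  have h := skew_pair hM x x
  linear_combination h / 2

lemma exists_kernel_vec (M : Matrix (Fin 5) (Fin 5) ℂ) (hM : Mᵀ = -M) :
    ∃ v, v ≠ 0 ∧ M.mulVec v = 0 := by
  rw [Matrix.exists_mulVec_eq_zero_iff]
  have h1 : Mᵀ.det = M.det := Matrix.det_transpose M
  rw [hM, Matrix.det_neg] at h1
  simp at h1
  linear_combination - h1 / 2

-- rank facts
lemma rank_ker_le (M : Matrix (Fin 5) (Fin 5) ℂ) (h4 : 4 ≤ M.rank) :
    Module.finrank ℂ (LinearMap.ker M.mulVecLin) ≤ 1 := by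
  have := LinearMap.finrank_range_add_finrank_ker M.mulVecLin
  have hd : Module.finrank ℂ (Fin 5 → ℂ) = 5 := by simp
  have hr : M.rank = Module.finrank ℂ (LinearMap.range M.mulVecLin) := rfl
  omega

lemma ker_span (M : Matrix (Fin 5) (Fin 5) ℂ) (h4 : 4 ≤ M.rank) {v w : Fin 5 → ℂ}
    (hv : v ≠ 0) (hMv : M.mulVec v = 0) (hMw : M.mulVec w = 0) : ∃ c : ℂ, w = c • v := by
  have hle : Submodule.span ℂ {v} ≤ LinearMap.ker M.mulVecLin := by
    rw [Submodule.span_singleton_le_iff_mem]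
    simpa [LinearMap.mem_ker] using hMv
  have h1 : Module.finrank ℂ (Submodule.span ℂ ({v} : Set (Fin 5 → ℂ))) = 1 :=
    finrank_span_singleton hv
  have heq : Submodule.span ℂ {v} = LinearMap.ker M.mulVecLin := by
    apply Submodule.eq_of_le_of_finrank_le hle
    rw [h1]; exact rank_ker_le M h4
  have : w ∈ Submodule.span ℂ ({v} : Set (Fin 5 → ℂ)) := by
    rw [heq]; simpa [LinearMap.mem_ker] using hMw
  rcases Submodule.mem_span_singleton.mp this with ⟨c, hc⟩
  exact ⟨c, hc.symm⟩

def dotL (v : Fin 5 → ℂ) : (Fin 5 → ℂ) →ₗ[ℂ] ℂ where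
  toFun y := v ⬝ᵥ y
  map_add' a b := dotProduct_add v a b
  map_smul' c y := dotProduct_smul c v y

lemma finrank_ker_dotL {v : Fin 5 → ℂ} (hv : v ≠ 0) :
    Module.finrank ℂ (LinearMap.ker (dotL v)) = 4 := by
  obtain ⟨i, hi⟩ : ∃ i, v i ≠ 0 := by
    by_contra h; push_neg at h; exact hv (funext h)
  have hsurj : LinearMap.range (dotL v) = ⊤ := by
    rw [LinearMap.range_eq_top]
    intro c
    refine ⟨(c / v i) • (Pi.single i 1 : Fin 5 → ℂ), ?_⟩
    show v ⬝ᵥ _ = c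
    rw [dotProduct_smul, dotProduct_single]
    simp only [smul_eq_mul, mul_one]; rw [div_mul_cancel₀ _ hi]
  have := LinearMap.finrank_range_add_finrank_ker (dotL v)
  rw [hsurj] at this
  rw [finrank_top ℂ ℂ, Module.finrank_self] at this
  have h5 : Module.finrank ℂ (Fin 5 → ℂ) = 5 := by simp
  omega

lemma solv (M : Matrix (Fin 5) (Fin 5) ℂ) (hM : Mᵀ = -M) (h4 : 4 ≤ M.rank)
    {v : Fin 5 → ℂ} (hv : v ≠ 0) (hMv : M.mulVec v = 0) :
    ∀ y, v ⬝ᵥ y = 0 → ∃ z, M.mulVec z = y := by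
  have hle : LinearMap.range M.mulVecLin ≤ LinearMap.ker (dotL v) := by
    rintro y ⟨z, rfl⟩
    show v ⬝ᵥ (M.mulVecLin z) = 0
    rw [Matrix.mulVecLin_apply, skew_pair hM, hMv]
    simp
  have heq : LinearMap.range M.mulVecLin = LinearMap.ker (dotL v) := by
    apply Submodule.eq_of_le_of_finrank_le hle
    rw [finrank_ker_dotL hv]
    exact h4
  intro y hy
  have : y ∈ LinearMap.range M.mulVecLin := by
    rw [heq]; exact hy
  rcases this with ⟨z, hz⟩
  exact ⟨z, by rw [← Matrix.mulVecLin_apply]; exact hz⟩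

lemma rank_le_two (M : Matrix (Fin 5) (Fin 5) ℂ) (u v : Fin 5 → ℂ)
    (h : ∀ x, ∃ a b : ℂ, M.mulVec x = a • u + b • v) : M.rank ≤ 2 := by
  set N : Matrix (Fin 5) (Fin 2) ℂ := Matrix.of fun i j => ![u, v] j i with hN
  have hle : LinearMap.range M.mulVecLin ≤ LinearMap.range N.mulVecLin := by
    rintro y ⟨x, rfl⟩
    obtain ⟨a, b, hab⟩ := h x
    refine ⟨![a, b], ?_⟩
    show N.mulVec ![a, b] = M.mulVecLin x
    rw [Matrix.mulVecLin_apply, hab]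
    funext i
    simp [hN, Matrix.mulVec, dotProduct, Fin.sum_univ_two]
    ring
  have h1 : M.rank = Module.finrank ℂ (LinearMap.range M.mulVecLin) := rfl
  rw [h1]
  calc Module.finrank ℂ (LinearMap.range M.mulVecLin)
      ≤ Module.finrank ℂ (LinearMap.range N.mulVecLin) := Submodule.finrank_mono hle
    _ ≤ Module.finrank ℂ (Fin 2 → ℂ) := LinearMap.finrank_range_le _
    _ = 2 := by simp

lemma rank_rows_indep {k : ℕ} (w : Fin k → (Fin 5 → ℂ)) (h : LinearIndependent ℂ w) :
    (Matrix.of w : Matrix (Fin k) (Fin 5) ℂ).rank = k := by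
  set N : Matrix (Fin k) (Fin 5) ℂ := Matrix.of w with hN
  have hker : LinearMap.ker (Nᵀ.mulVecLin) = ⊥ := by
    rw [LinearMap.ker_eq_bot']
    intro c hc
    have hc' : ∑ i : Fin k, c i • w i = 0 := by
      funext j
      have := congrFun hc j
      simp [hN, Matrix.mulVecLin_apply, Matrix.mulVec_transpose, Matrix.vecMul, dotProduct] at this
      simpa [Finset.sum_apply, Pi.smul_apply, smul_eq_mul, mul_comm] using this
    exact funext (Fintype.linearIndependent_iff.mp h c hc')
  have h2 := LinearMap.finrank_range_add_finrank_ker (Nᵀ.mulVecLin)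
  rw [hker] at h2
  have hrt : Nᵀ.rank = N.rank := Matrix.rank_transpose N
  have hrr : Nᵀ.rank = Module.finrank ℂ (LinearMap.range Nᵀ.mulVecLin) := rfl
  have hk : Module.finrank ℂ (Fin k → ℂ) = k := by simp
  simp [hk] at h2
  omega

lemma exists_dual {u v : Fin 5 → ℂ} (h : LinearIndependent ℂ ![u, v]) (a b : ℂ) :
    ∃ r, u ⬝ᵥ r = a ∧ v ⬝ᵥ r = b := by
  set N : Matrix (Fin 2) (Fin 5) ℂ := Matrix.of ![u, v] with hN
  have hrk : N.rank = 2 := rank_rows_indep ![u, v] h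
  have htop : LinearMap.range N.mulVecLin = ⊤ := by
    apply Submodule.eq_top_of_finrank_eq
    rw [show Module.finrank ℂ (LinearMap.range N.mulVecLin) = N.rank from rfl, hrk]
    simp
  have : (![a, b] : Fin 2 → ℂ) ∈ LinearMap.range N.mulVecLin := by rw [htop]; trivial
  rcases this with ⟨r, hr⟩
  refine ⟨r, ?_, ?_⟩
  · have := congrFun hr 0
    simpa [hN, Matrix.mulVecLin_apply, Matrix.mulVec] using this
  · have := congrFun hr 1
    simpa [hN, Matrix.mulVecLin_apply, Matrix.mulVec] using this

lemma sum_dot {k : ℕ} (c : Fin k → ℂ) (V : Fin k → Fin 5 → ℂ) (w : Fin 5 → ℂ) :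
    (∑ i, c i • V i) ⬝ᵥ w = ∑ i, c i * (V i ⬝ᵥ w) := by
  simp only [dotProduct, Finset.sum_apply, Pi.smul_apply, smul_eq_mul, Finset.sum_mul,
    Finset.mul_sum, mul_assoc]
  exact Finset.sum_comm

lemma pair_expand {k : ℕ} (M : Matrix (Fin 5) (Fin 5) ℂ) (V : Fin k → Fin 5 → ℂ) (c d : Fin k → ℂ) :
    (∑ i, c i • V i) ⬝ᵥ M.mulVec (∑ j, d j • V j)
      = ∑ i, ∑ j, c i * d j * (V i ⬝ᵥ M.mulVec (V j)) := by
  have h1 : M.mulVec (∑ j, d j • V j) = ∑ j, d j • M.mulVec (V j) := by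
    simp only [← Matrix.mulVecLin_apply, map_sum, LinearMap.map_smul]
  rw [h1, sum_dot]
  apply Finset.sum_congr rfl
  intro i _
  have h2 : V i ⬝ᵥ ∑ j, d j • M.mulVec (V j) = ∑ j, d j * (V i ⬝ᵥ M.mulVec (V j)) := by
    rw [dotProduct_comm, sum_dot]
    apply Finset.sum_congr rfl
    intro j _
    rw [dotProduct_comm]
  rw [h2, Finset.mul_sum]
  apply Finset.sum_congr rfl
  intro j _
  ring

lemma degen_core (M : Matrix (Fin 5) (Fin 5) ℂ) (f : Fin 5 → ℂ) (hf : f ≠ 0)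
    (hvan : ∀ y z, f ⬝ᵥ y = 0 → f ⬝ᵥ z = 0 → y ⬝ᵥ M.mulVec z = 0) : M.rank ≤ 2 := by
  obtain ⟨i, hi⟩ : ∃ i, f i ≠ 0 := by
    by_contra h; push_neg at h; exact hf (funext h)
  set e : Fin 5 → ℂ := Pi.single i 1 with he
  have hfe : f ⬝ᵥ e = f i := by rw [he, dotProduct_single, mul_one]
  have hyp' : ∀ y : Fin 5 → ℂ, f ⬝ᵥ (y - ((f ⬝ᵥ y) / f i) • e) = 0 := by
    intro y
    rw [dotProduct_sub, dotProduct_smul, hfe]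
    rw [smul_eq_mul, div_mul_cancel₀ _ hi, sub_self]
  have claim : ∀ z, f ⬝ᵥ z = 0 → M.mulVec z = ((e ⬝ᵥ M.mulVec z) / f i) • f := by
    intro z hz
    set cz : ℂ := (e ⬝ᵥ M.mulVec z) / f i with hcz
    funext j
    set y : Fin 5 → ℂ := Pi.single j 1 with hy
    have h1 : (y - ((f ⬝ᵥ y) / f i) • e) ⬝ᵥ (M.mulVec z - cz • f) = 0 := by
      rw [dotProduct_sub]
      have hA := hvan _ z (hyp' y) hz
      have hBB : (y - ((f ⬝ᵥ y) / f i) • e) ⬝ᵥ (cz • f) = 0 := by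
        rw [dotProduct_smul, dotProduct_comm, hyp' y]
        simp
      rw [hA, hBB, sub_zero]
    have h2 : e ⬝ᵥ (M.mulVec z - cz • f) = 0 := by
      rw [dotProduct_sub, dotProduct_smul, dotProduct_comm e f, hfe, hcz]
      rw [smul_eq_mul, div_mul_cancel₀ _ hi, sub_self]
    have h3 : y ⬝ᵥ (M.mulVec z - cz • f) = 0 := by
      have hdec : y ⬝ᵥ (M.mulVec z - cz • f)
          = (y - ((f ⬝ᵥ y) / f i) • e) ⬝ᵥ (M.mulVec z - cz • f)
            + ((f ⬝ᵥ y) / f i) * (e ⬝ᵥ (M.mulVec z - cz • f)) := by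
        rw [sub_dotProduct, smul_dotProduct]
        simp only [smul_eq_mul]
        ring
      rw [hdec, h1, h2]
      ring
    rw [hy, single_dotProduct, one_mul] at h3
    have h4 : M.mulVec z j - cz * f j = 0 := by
      simpa [Pi.sub_apply, Pi.smul_apply, smul_eq_mul] using h3
    have := sub_eq_zero.mp h4
    simpa [Pi.smul_apply, smul_eq_mul] using this
  apply rank_le_two M f (M.mulVec e)
  intro x
  set x' : Fin 5 → ℂ := x - ((f ⬝ᵥ x) / f i) • e with hx'
  set a : ℂ := (e ⬝ᵥ M.mulVec x') / f i with ha
  refine ⟨a, (f ⬝ᵥ x) / f i, ?_⟩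
  have hdecomp : M.mulVec x = M.mulVec x' + ((f ⬝ᵥ x) / f i) • M.mulVec e := by
    rw [hx', Matrix.mulVec_sub, Matrix.mulVec_smul]
    abel
  rw [hdecomp, claim x' (hyp' x)]

lemma degen (P Q : Matrix (Fin 5) (Fin 5) ℂ) (hP : Pᵀ = -P) (hQ : Qᵀ = -Q)
    (hrk : ∀ κ ν : ℂ, ¬(κ = 0 ∧ ν = 0) → 4 ≤ (κ • P + ν • Q).rank)
    (u w : Fin 5 → ℂ) (hQu : Q.mulVec u = 0) (hPw : P.mulVec w = 0)
    (hQw : Q.mulVec w = P.mulVec u) (hPu : P.mulVec u ≠ 0) : False := by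
  set f : Fin 5 → ℂ := P.mulVec u with hf
  have hfu : f ⬝ᵥ u = 0 := by rw [hf, dotProduct_comm]; exact skew_self hP u
  have hfw : f ⬝ᵥ w = 0 := by rw [← hQw, dotProduct_comm]; exact skew_self hQ w
  by_cases hcase : ∀ y z, f ⬝ᵥ y = 0 → f ⬝ᵥ z = 0 → y ⬝ᵥ P.mulVec z = 0
  · have hr2 := degen_core P f hPu hcase
    have h4 := hrk 1 0 (by norm_num)
    rw [one_smul, zero_smul, add_zero] at h4
    omega
  · push_neg at hcase
    obtain ⟨s, t, hfs, hft, hst⟩ := hcase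
    set τ : ℂ := s ⬝ᵥ P.mulVec t with hτ
    set σ : ℂ := s ⬝ᵥ Q.mulVec t with hσ
    set M : Matrix (Fin 5) (Fin 5) ℂ := σ • P + (-τ) • Q with hM
    have hMvec : ∀ x, M.mulVec x = σ • P.mulVec x + (-τ) • Q.mulVec x := by
      intro x
      rw [hM, Matrix.add_mulVec, Matrix.smul_mulVec, Matrix.smul_mulVec]
    -- zero pairing facts
    have xPu : ∀ x, f ⬝ᵥ x = 0 → x ⬝ᵥ P.mulVec u = 0 := by
      intro x hx; rw [show P.mulVec u = f from rfl, dotProduct_comm]; exact hx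
    have uPx : ∀ x, f ⬝ᵥ x = 0 → u ⬝ᵥ P.mulVec x = 0 := by
      intro x hx; rw [skew_pair hP, xPu x hx, neg_zero]
    have xPw : ∀ x, x ⬝ᵥ P.mulVec w = 0 := by intro x; rw [hPw, dotProduct_zero]
    have wPx : ∀ x, w ⬝ᵥ P.mulVec x = 0 := by
      intro x; rw [skew_pair hP, xPw, neg_zero]
    have xQu : ∀ x, x ⬝ᵥ Q.mulVec u = 0 := by intro x; rw [hQu, dotProduct_zero]
    have uQx : ∀ x, u ⬝ᵥ Q.mulVec x = 0 := by
      intro x; rw [skew_pair hQ, xQu, neg_zero]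
    have xQw : ∀ x, f ⬝ᵥ x = 0 → x ⬝ᵥ Q.mulVec w = 0 := by
      intro x hx; rw [hQw, dotProduct_comm]; exact hx
    have wQx : ∀ x, f ⬝ᵥ x = 0 → w ⬝ᵥ Q.mulVec x = 0 := by
      intro x hx; rw [skew_pair hQ, xQw x hx, neg_zero]
    -- nonzero / independence of u, w
    have hu0 : u ≠ 0 := fun h => hPu (by rw [hf, h, Matrix.mulVec_zero])
    have hw0 : w ≠ 0 := fun h => hPu (by rw [← hQw, h, Matrix.mulVec_zero])
    have hind_uw : LinearIndependent ℂ ![u, w] := by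
      rw [linearIndependent_fin2]
      refine ⟨by simpa using hw0, ?_⟩
      intro a ha
      simp only [Matrix.cons_val_one, Matrix.cons_val_zero, Matrix.head_cons] at ha
      apply hPu
      rw [show f = P.mulVec u from hf, ← ha, Matrix.mulVec_smul, hPw, smul_zero]
    set V : Fin 4 → (Fin 5 → ℂ) := ![s, t, u, w] with hV
    have hfV : ∀ i, f ⬝ᵥ V i = 0 := by
      intro i; fin_cases i <;> simpa [hV] using (by assumption : _)
    -- V linear independence
    have hVind : LinearIndependent ℂ V := by
      rw [Fintype.linearIndependent_iff]
      intro g hg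
      have h0 : g 0 = 0 := by
        have hdot : (∑ i, g i • V i) ⬝ᵥ P.mulVec t = 0 := by rw [hg, zero_dotProduct]
        rw [sum_dot, Fin.sum_univ_four] at hdot
        rw [show V 0 = s from rfl, show V 1 = t from rfl, show V 2 = u from rfl,
          show V 3 = w from rfl] at hdot
        rw [skew_self hP t, uPx t hft, wPx t, ← hτ] at hdot
        simp only [mul_zero, add_zero] at hdot
        exact (mul_eq_zero.mp hdot).resolve_right hst
      have h1 : g 1 = 0 := by
        have hdot : (∑ i, g i • V i) ⬝ᵥ P.mulVec s = 0 := by rw [hg, zero_dotProduct]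
        rw [sum_dot, Fin.sum_univ_four] at hdot
        rw [show V 0 = s from rfl, show V 1 = t from rfl, show V 2 = u from rfl,
          show V 3 = w from rfl] at hdot
        rw [skew_self hP s, skew_pair hP t s, uPx s hfs, wPx s, ← hτ] at hdot
        simp only [mul_zero, add_zero, mul_neg, zero_add] at hdot
        have := neg_eq_zero.mp hdot
        exact (mul_eq_zero.mp this).resolve_right hst
      have huw : g 2 • u + g 3 • w = 0 := by
        rw [Fin.sum_univ_four] at hg
        rw [show V 2 = u from rfl, show V 3 = w from rfl] at hg
        rw [show V 0 = s from rfl, show V 1 = t from rfl] at hg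
        rw [h0, h1] at hg
        simpa using hg
      have h23 := Fintype.linearIndependent_iff.mp hind_uw ![g 2, g 3] (by
        rw [Fin.sum_univ_two]
        simpa using huw)
      intro i
      fin_cases i
      · exact h0
      · exact h1
      · simpa using h23 0
      · simpa using h23 1
    -- span equals hyperplane
    have hS4le : Submodule.span ℂ (Set.range V) ≤ LinearMap.ker (dotL f) := by
      rw [Submodule.span_le]
      rintro _ ⟨i, rfl⟩
      rw [SetLike.mem_coe, LinearMap.mem_ker]
      exact hfV i
    have hS4 : Submodule.span ℂ (Set.range V) = LinearMap.ker (dotL f) := by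
      apply Submodule.eq_of_le_of_finrank_le hS4le
      rw [finrank_ker_dotL hPu, finrank_span_eq_card hVind]
      simp
    -- pair table for M
    have hMtab : ∀ i j, V i ⬝ᵥ M.mulVec (V j) = 0 := by
      have hexp : ∀ (x y : Fin 5 → ℂ), x ⬝ᵥ M.mulVec y
          = σ • (x ⬝ᵥ P.mulVec y) + -τ • (x ⬝ᵥ Q.mulVec y) := by
        intro x y
        rw [hMvec, dotProduct_add, dotProduct_smul, dotProduct_smul]
      intro i j
      rw [hexp]
      fin_cases i <;> fin_cases j
      · show σ • (s ⬝ᵥ P.mulVec s) + -τ • (s ⬝ᵥ Q.mulVec s) = 0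
        rw [skew_self hP, skew_self hQ]; simp
      · show σ • (s ⬝ᵥ P.mulVec t) + -τ • (s ⬝ᵥ Q.mulVec t) = 0
        rw [← hτ, ← hσ]; simp only [smul_eq_mul]; ring
      · show σ • (s ⬝ᵥ P.mulVec u) + -τ • (s ⬝ᵥ Q.mulVec u) = 0
        rw [xPu s hfs, xQu s]; simp
      · show σ • (s ⬝ᵥ P.mulVec w) + -τ • (s ⬝ᵥ Q.mulVec w) = 0
        rw [xPw s, xQw s hfs]; simp
      · show σ • (t ⬝ᵥ P.mulVec s) + -τ • (t ⬝ᵥ Q.mulVec s) = 0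
        rw [skew_pair hP t s, skew_pair hQ t s, ← hτ, ← hσ]
        simp only [smul_eq_mul]; ring
      · show σ • (t ⬝ᵥ P.mulVec t) + -τ • (t ⬝ᵥ Q.mulVec t) = 0
        rw [skew_self hP, skew_self hQ]; simp
      · show σ • (t ⬝ᵥ P.mulVec u) + -τ • (t ⬝ᵥ Q.mulVec u) = 0
        rw [xPu t hft, xQu t]; simp
      · show σ • (t ⬝ᵥ P.mulVec w) + -τ • (t ⬝ᵥ Q.mulVec w) = 0
        rw [xPw t, xQw t hft]; simp
      · show σ • (u ⬝ᵥ P.mulVec s) + -τ • (u ⬝ᵥ Q.mulVec s) = 0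
        rw [uPx s hfs, uQx s]; simp
      · show σ • (u ⬝ᵥ P.mulVec t) + -τ • (u ⬝ᵥ Q.mulVec t) = 0
        rw [uPx t hft, uQx t]; simp
      · show σ • (u ⬝ᵥ P.mulVec u) + -τ • (u ⬝ᵥ Q.mulVec u) = 0
        rw [skew_self hP, skew_self hQ]; simp
      · show σ • (u ⬝ᵥ P.mulVec w) + -τ • (u ⬝ᵥ Q.mulVec w) = 0
        rw [uPx w hfw, uQx w]; simp
      · show σ • (w ⬝ᵥ P.mulVec s) + -τ • (w ⬝ᵥ Q.mulVec s) = 0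
        rw [wPx s, wQx s hfs]; simp
      · show σ • (w ⬝ᵥ P.mulVec t) + -τ • (w ⬝ᵥ Q.mulVec t) = 0
        rw [wPx t, wQx t hft]; simp
      · show σ • (w ⬝ᵥ P.mulVec u) + -τ • (w ⬝ᵥ Q.mulVec u) = 0
        rw [xPu w hfw, xQu w]; simp
      · show σ • (w ⬝ᵥ P.mulVec w) + -τ • (w ⬝ᵥ Q.mulVec w) = 0
        rw [skew_self hP, skew_self hQ]; simp
    -- vanishing on the hyperplane
    have hvan : ∀ y z, f ⬝ᵥ y = 0 → f ⬝ᵥ z = 0 → y ⬝ᵥ M.mulVec z = 0 := by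
      intro y z hy hz
      have hyZ : y ∈ Submodule.span ℂ (Set.range V) := by
        rw [hS4, LinearMap.mem_ker]; exact hy
      have hzZ : z ∈ Submodule.span ℂ (Set.range V) := by
        rw [hS4, LinearMap.mem_ker]; exact hz
      obtain ⟨c, hc⟩ := (Submodule.mem_span_range_iff_exists_fun ℂ).mp hyZ
      obtain ⟨d, hd⟩ := (Submodule.mem_span_range_iff_exists_fun ℂ).mp hzZ
      rw [← hc, ← hd, pair_expand]
      simp [hMtab]
    have hr2 := degen_core M f hPu hvan
    have h4 := hrk σ (-τ) (fun h => hst (neg_eq_zero.mp h.2))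
    rw [← hM] at h4
    omega

lemma dot_mulVec_sum {k : ℕ} (M : Matrix (Fin 5) (Fin 5) ℂ) (x : Fin 5 → ℂ)
    (V : Fin k → Fin 5 → ℂ) (d : Fin k → ℂ) :
    x ⬝ᵥ M.mulVec (∑ j, d j • V j) = ∑ j, d j * (x ⬝ᵥ M.mulVec (V j)) := by
  have h1 : M.mulVec (∑ j, d j • V j) = ∑ j, d j • M.mulVec (V j) := by
    simp only [← Matrix.mulVecLin_apply, map_sum, LinearMap.map_smul]
  rw [h1, dotProduct_comm, sum_dot]
  exact Finset.sum_congr rfl fun j _ => by rw [dotProduct_comm]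

lemma isotropic_four (M : Matrix (Fin 5) (Fin 5) ℂ) (v : Fin 4 → Fin 5 → ℂ)
    (hind : LinearIndependent ℂ v) (htab : ∀ i j, v i ⬝ᵥ M.mulVec (v j) = 0) :
    M.rank ≤ 2 := by
  set N : Matrix (Fin 4) (Fin 5) ℂ := Matrix.of v with hN
  have hrkN : N.rank = 4 := rank_rows_indep v hind
  have hK : Module.finrank ℂ (LinearMap.ker N.mulVecLin) = 1 := by
    have h1 := LinearMap.finrank_range_add_finrank_ker N.mulVecLin
    have h2 : N.rank = Module.finrank ℂ (LinearMap.range N.mulVecLin) := rfl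
    have h5 : Module.finrank ℂ (Fin 5 → ℂ) = 5 := by simp
    omega
  obtain ⟨ζ, hζK, hζ0⟩ : ∃ ζ ∈ LinearMap.ker N.mulVecLin, ζ ≠ 0 := by
    have hnb : LinearMap.ker N.mulVecLin ≠ ⊥ := by
      intro hbot
      rw [hbot] at hK
      simp at hK
    exact (Submodule.ne_bot_iff _).mp hnb
  have hKspan : LinearMap.ker N.mulVecLin = Submodule.span ℂ {ζ} := by
    symm
    apply Submodule.eq_of_le_of_finrank_le
    · rw [Submodule.span_singleton_le_iff_mem]; exact hζK
    · rw [hK, finrank_span_singleton hζ0]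
  set X4 : Submodule ℂ (Fin 5 → ℂ) := Submodule.span ℂ (Set.range v) with hX4
  have hfr4 : Module.finrank ℂ X4 = 4 := by
    rw [hX4, finrank_span_eq_card hind]; simp
  have hne : X4 ≠ ⊤ := by
    intro h
    rw [h] at hfr4
    rw [finrank_top] at hfr4
    simp at hfr4
  obtain ⟨e, he⟩ : ∃ e, e ∉ X4 := by
    by_contra hcon
    push_neg at hcon
    exact hne (Submodule.eq_top_iff'.mpr hcon)
  have hinf : X4 ⊓ Submodule.span ℂ {e} = ⊥ := by
    rw [Submodule.eq_bot_iff]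
    rintro x ⟨hx1, hx2⟩
    rcases Submodule.mem_span_singleton.mp hx2 with ⟨c, rfl⟩
    rcases eq_or_ne c 0 with rfl | hc
    · simp
    · exfalso
      apply he
      have : c⁻¹ • (c • e) ∈ X4 := Submodule.smul_mem _ _ hx1
      rwa [smul_smul, inv_mul_cancel₀ hc, one_smul] at this
  have hsup : X4 ⊔ Submodule.span ℂ {e} = ⊤ := by
    apply Submodule.eq_top_of_finrank_eq
    have := Submodule.finrank_sup_add_finrank_inf_eq X4 (Submodule.span ℂ {e})
    rw [hinf, hfr4, finrank_span_singleton (by rintro rfl; exact he (Submodule.zero_mem _))] at this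
    simp at this
    simp [this]
  apply rank_le_two M ζ (M.mulVec e)
  intro x
  have hx : x ∈ X4 ⊔ Submodule.span ℂ {e} := by rw [hsup]; trivial
  rcases Submodule.mem_sup.mp hx with ⟨y, hy, z, hz, rfl⟩
  rcases Submodule.mem_span_singleton.mp hz with ⟨c, rfl⟩
  have hMy : M.mulVec y ∈ LinearMap.ker N.mulVecLin := by
    rw [LinearMap.mem_ker]
    funext i
    obtain ⟨d, hd⟩ := (Submodule.mem_span_range_iff_exists_fun ℂ).mp hy
    have : v i ⬝ᵥ M.mulVec y = 0 := by
      rw [← hd, dot_mulVec_sum]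
      simp [htab]
    simpa [hN, Matrix.mulVecLin_apply, Matrix.mulVec, dotProduct] using this
  rw [hKspan] at hMy
  rcases Submodule.mem_span_singleton.mp hMy with ⟨a, ha⟩
  refine ⟨a, c, ?_⟩
  rw [Matrix.mulVec_add, Matrix.mulVec_smul, ha]


lemma conj_entry (X M : Matrix (Fin 5) (Fin 5) ℂ) (i j : Fin 5) :
    (X * M * Xᵀ) i j = (X i) ⬝ᵥ M.mulVec (X j) := by
  simp only [Matrix.mul_apply, Matrix.transpose_apply, Matrix.mulVec, dotProduct,
    Finset.sum_mul, Finset.mul_sum, mul_assoc]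
  rw [Finset.sum_comm]

lemma rows_indep_isUnit (r : Fin 5 → Fin 5 → ℂ) (h : LinearIndependent ℂ r) :
    IsUnit (Matrix.of r : Matrix (Fin 5) (Fin 5) ℂ) := by
  rw [Matrix.isUnit_iff_isUnit_det, isUnit_iff_ne_zero]
  intro h0
  have h0' : (Matrix.of r : Matrix (Fin 5) (Fin 5) ℂ)ᵀ.det = 0 := by
    rw [Matrix.det_transpose]; exact h0
  obtain ⟨v, hv0, hv⟩ := Matrix.exists_mulVec_eq_zero_iff.mpr h0'
  apply hv0
  have hsum : ∑ i, v i • r i = 0 := by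
    funext j
    have := congrFun hv j
    simp [Matrix.mulVec_transpose, Matrix.vecMul, dotProduct] at this
    simpa [Finset.sum_apply, Pi.smul_apply, smul_eq_mul, mul_comm] using this
  funext i
  exact Fintype.linearIndependent_iff.mp h v hsum i


lemma assemble (A B P Q : Matrix (Fin 5) (Fin 5) ℂ) (hP : Pᵀ = -P) (hQ : Qᵀ = -Q)
    (hrkPQ : ∀ κ ν : ℂ, ¬(κ = 0 ∧ ν = 0) → 4 ≤ (κ • P + ν • Q).rank)
    (hspan : Submodule.span ℂ ({P, Q} : Set (Matrix (Fin 5) (Fin 5) ℂ))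
      = Submodule.span ℂ ({A, B} : Set (Matrix (Fin 5) (Fin 5) ℂ)))
    (z₀ z₁ z₂ : Fin 5 → ℂ) (hz0 : z₀ ≠ 0)
    (hQz0 : Q.mulVec z₀ = 0) (hQz1 : Q.mulVec z₁ = P.mulVec z₀)
    (hQz2 : Q.mulVec z₂ = P.mulVec z₁) (hPz2 : P.mulVec z₂ = 0)
    (hkerPQ : ∀ x, P.mulVec x = 0 → Q.mulVec x = 0 → x = 0) :
    ∃ X A' B' : Matrix (Fin 5) (Fin 5) ℂ,
      IsUnit X ∧
      Submodule.span ℂ ({A', B'} : Set (Matrix (Fin 5) (Fin 5) ℂ))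
        = Submodule.span ℂ ({A, B} : Set (Matrix (Fin 5) (Fin 5) ℂ)) ∧
      LinearIndependent ℂ ![A', B'] ∧
      X * A' * Xᵀ = skewS 1 4 + skewS 2 3 ∧
      X * B' * Xᵀ = skewS 0 4 + skewS 1 3 := by
  have hPz0ne : P.mulVec z₀ ≠ 0 := fun h => hz0 (hkerPQ z₀ h hQz0)
  have hPz1ne : P.mulVec z₁ ≠ 0 := by
    intro h
    exact degen P Q hP hQ hrkPQ z₀ z₁ hQz0 h hQz1 hPz0ne
  have hPzind : LinearIndependent ℂ ![P.mulVec z₀, P.mulVec z₁] := by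
    rw [linearIndependent_fin2]
    constructor
    · simpa using hPz1ne
    · intro a ha
      simp only [Matrix.cons_val_one, Matrix.head_cons, Matrix.cons_val_zero] at ha
      rcases eq_or_ne a 0 with rfl | ha0
      · rw [zero_smul] at ha
        exact hPz0ne ha.symm
      · refine degen P Q hP hQ hrkPQ ((-a) • z₀) (z₀ - a • z₁) ?_ ?_ ?_ ?_
        · rw [Matrix.mulVec_smul, hQz0, smul_zero]
        · rw [Matrix.mulVec_sub, Matrix.mulVec_smul, ha, sub_self]
        · rw [Matrix.mulVec_sub, Matrix.mulVec_smul, hQz0, hQz1, Matrix.mulVec_smul]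
          module
        · rw [Matrix.mulVec_smul]
          exact smul_ne_zero (neg_ne_zero.mpr ha0) hPz0ne
  have hzind : LinearIndependent ℂ ![z₀, z₁, z₂] := by
    rw [Fintype.linearIndependent_iff]
    intro g hg
    have hQg : g 0 • Q.mulVec z₀ + g 1 • Q.mulVec z₁ + g 2 • Q.mulVec z₂ = 0 := by
      have := congrArg Q.mulVec hg
      rw [Fin.sum_univ_three] at this
      rw [show (![z₀, z₁, z₂] : Fin 3 → Fin 5 → ℂ) 0 = z₀ from rfl,
        show (![z₀, z₁, z₂] : Fin 3 → Fin 5 → ℂ) 1 = z₁ from rfl,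
        show (![z₀, z₁, z₂] : Fin 3 → Fin 5 → ℂ) 2 = z₂ from rfl] at this
      rw [Matrix.mulVec_add, Matrix.mulVec_add, Matrix.mulVec_smul, Matrix.mulVec_smul,
        Matrix.mulVec_smul, Matrix.mulVec_zero] at this
      exact this
    rw [hQz0, hQz1, hQz2, smul_zero, zero_add] at hQg
    have h12 := Fintype.linearIndependent_iff.mp hPzind ![g 1, g 2] (by
      rw [Fin.sum_univ_two]
      simpa using hQg)
    have hg1 : g 1 = 0 := by simpa using h12 0
    have hg2 : g 2 = 0 := by simpa using h12 1
    have hg0 : g 0 = 0 := by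
      rw [Fin.sum_univ_three] at hg
      rw [hg1, hg2] at hg
      simp only [zero_smul, add_zero] at hg
      rw [show (![z₀, z₁, z₂] : Fin 3 → Fin 5 → ℂ) 0 = z₀ from rfl] at hg
      by_contra hne
      apply hz0
      have := congrArg (fun y => (g 0)⁻¹ • y) hg
      simpa [smul_smul, inv_mul_cancel₀ hne] using this
    intro i
    fin_cases i
    · exact hg0
    · exact hg1
    · exact hg2
  -- dual vectors
  obtain ⟨r₃, h30', h31'⟩ := exists_dual hPzind (-1) 0
  obtain ⟨r₄', h40', h41'⟩ := exists_dual hPzind 0 (-1)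
  have c30 : r₃ ⬝ᵥ P.mulVec z₀ = -1 := by rw [dotProduct_comm]; exact h30'
  have c31 : r₃ ⬝ᵥ P.mulVec z₁ = 0 := by rw [dotProduct_comm]; exact h31'
  have c40' : r₄' ⬝ᵥ P.mulVec z₀ = 0 := by rw [dotProduct_comm]; exact h40'
  have c41' : r₄' ⬝ᵥ P.mulVec z₁ = -1 := by rw [dotProduct_comm]; exact h41'
  set α : ℂ := r₃ ⬝ᵥ P.mulVec r₄' with hα
  set β : ℂ := r₃ ⬝ᵥ Q.mulVec r₄' with hβ
  set r₄ : Fin 5 → ℂ := r₄' + α • z₀ + β • z₁ with hr4def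
  have hr4dot : ∀ (Mm : Matrix (Fin 5) (Fin 5) ℂ) (x : Fin 5 → ℂ),
      x ⬝ᵥ Mm.mulVec r₄
        = x ⬝ᵥ Mm.mulVec r₄' + α * (x ⬝ᵥ Mm.mulVec z₀) + β * (x ⬝ᵥ Mm.mulVec z₁) := by
    intro Mm x
    rw [hr4def, Matrix.mulVec_add, Matrix.mulVec_add, Matrix.mulVec_smul, Matrix.mulVec_smul,
      dotProduct_add, dotProduct_add, dotProduct_smul, dotProduct_smul]
    simp [smul_eq_mul]
  have hr4rev : ∀ (Mm : Matrix (Fin 5) (Fin 5) ℂ) (x : Fin 5 → ℂ),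
      r₄ ⬝ᵥ Mm.mulVec x
        = r₄' ⬝ᵥ Mm.mulVec x + α * (z₀ ⬝ᵥ Mm.mulVec x) + β * (z₁ ⬝ᵥ Mm.mulVec x) := by
    intro Mm x
    rw [hr4def, add_dotProduct, add_dotProduct, smul_dotProduct, smul_dotProduct]
    simp [smul_eq_mul]
  -- zero helper facts
  have xPz2 : ∀ x, x ⬝ᵥ P.mulVec z₂ = 0 := fun x => by rw [hPz2, dotProduct_zero]
  have xQz0 : ∀ x, x ⬝ᵥ Q.mulVec z₀ = 0 := fun x => by rw [hQz0, dotProduct_zero]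
  -- P pair table (order: z₂, z₁, z₀, r₃, r₄)
  have hP00 : z₂ ⬝ᵥ P.mulVec z₂ = 0 := skew_self hP z₂
  have hP11 : z₁ ⬝ᵥ P.mulVec z₁ = 0 := skew_self hP z₁
  have hP22 : z₀ ⬝ᵥ P.mulVec z₀ = 0 := skew_self hP z₀
  have hP33 : r₃ ⬝ᵥ P.mulVec r₃ = 0 := skew_self hP r₃
  have hP01 : z₂ ⬝ᵥ P.mulVec z₁ = 0 := by rw [← hQz2]; exact skew_self hQ z₂
  have hP10 : z₁ ⬝ᵥ P.mulVec z₂ = 0 := xPz2 z₁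
  have hP20 : z₀ ⬝ᵥ P.mulVec z₂ = 0 := xPz2 z₀
  have hP21 : z₀ ⬝ᵥ P.mulVec z₁ = 0 := by rw [← hQz2, skew_pair hQ, xQz0, neg_zero]
  have hP12 : z₁ ⬝ᵥ P.mulVec z₀ = 0 := by rw [skew_pair hP, hP21, neg_zero]
  have hP02 : z₂ ⬝ᵥ P.mulVec z₀ = 0 := by rw [skew_pair hP, hP20, neg_zero]
  have hP30 : r₃ ⬝ᵥ P.mulVec z₂ = 0 := xPz2 r₃
  have hP31 : r₃ ⬝ᵥ P.mulVec z₁ = 0 := c31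
  have hP32 : r₃ ⬝ᵥ P.mulVec z₀ = -1 := c30
  have hP40 : r₄ ⬝ᵥ P.mulVec z₂ = 0 := xPz2 r₄
  have hP41 : r₄ ⬝ᵥ P.mulVec z₁ = -1 := by
    rw [hr4rev, c41', hP21, hP11]; ring
  have hP42 : r₄ ⬝ᵥ P.mulVec z₀ = 0 := by
    rw [hr4rev, c40', hP22, hP12]; ring
  have hP44 : r₄ ⬝ᵥ P.mulVec r₄ = 0 := skew_self hP r₄
  have hP03 : z₂ ⬝ᵥ P.mulVec r₃ = 0 := by rw [skew_pair hP, hP30, neg_zero]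
  have hP04 : z₂ ⬝ᵥ P.mulVec r₄ = 0 := by rw [skew_pair hP, hP40, neg_zero]
  have hP13 : z₁ ⬝ᵥ P.mulVec r₃ = 0 := by rw [skew_pair hP, hP31, neg_zero]
  have hP14 : z₁ ⬝ᵥ P.mulVec r₄ = 1 := by rw [skew_pair hP, hP41]; norm_num
  have hP23 : z₀ ⬝ᵥ P.mulVec r₃ = 1 := by rw [skew_pair hP, hP32]; norm_num
  have hP24 : z₀ ⬝ᵥ P.mulVec r₄ = 0 := by rw [skew_pair hP, hP42, neg_zero]
  have hP34 : r₃ ⬝ᵥ P.mulVec r₄ = 0 := by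
    rw [hr4dot, ← hα, hP32, hP31]; ring
  have hP43 : r₄ ⬝ᵥ P.mulVec r₃ = 0 := by rw [skew_pair hP, hP34, neg_zero]
  -- Q pair table
  have hQ00 : z₂ ⬝ᵥ Q.mulVec z₂ = 0 := skew_self hQ z₂
  have hQ11 : z₁ ⬝ᵥ Q.mulVec z₁ = 0 := skew_self hQ z₁
  have hQ22 : z₀ ⬝ᵥ Q.mulVec z₀ = 0 := skew_self hQ z₀
  have hQ33 : r₃ ⬝ᵥ Q.mulVec r₃ = 0 := skew_self hQ r₃
  have hQ44 : r₄ ⬝ᵥ Q.mulVec r₄ = 0 := skew_self hQ r₄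
  have hQ02 : z₂ ⬝ᵥ Q.mulVec z₀ = 0 := xQz0 z₂
  have hQ12 : z₁ ⬝ᵥ Q.mulVec z₀ = 0 := xQz0 z₁
  have hQ10 : z₁ ⬝ᵥ Q.mulVec z₂ = 0 := by rw [hQz2]; exact hP11
  have hQ01 : z₂ ⬝ᵥ Q.mulVec z₁ = 0 := by rw [skew_pair hQ, hQ10, neg_zero]
  have hQ20 : z₀ ⬝ᵥ Q.mulVec z₂ = 0 := by rw [skew_pair hQ, xQz0, neg_zero]
  have hQ21 : z₀ ⬝ᵥ Q.mulVec z₁ = 0 := by rw [skew_pair hQ, xQz0, neg_zero]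
  have hQ30 : r₃ ⬝ᵥ Q.mulVec z₂ = 0 := by rw [hQz2]; exact c31
  have hQ31 : r₃ ⬝ᵥ Q.mulVec z₁ = -1 := by rw [hQz1]; exact c30
  have hQ32 : r₃ ⬝ᵥ Q.mulVec z₀ = 0 := xQz0 r₃
  have hQ40 : r₄ ⬝ᵥ Q.mulVec z₂ = -1 := by rw [hQz2]; exact hP41
  have hQ41 : r₄ ⬝ᵥ Q.mulVec z₁ = 0 := by rw [hQz1]; exact hP42
  have hQ42 : r₄ ⬝ᵥ Q.mulVec z₀ = 0 := xQz0 r₄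
  have hQ03 : z₂ ⬝ᵥ Q.mulVec r₃ = 0 := by rw [skew_pair hQ, hQ30, neg_zero]
  have hQ04 : z₂ ⬝ᵥ Q.mulVec r₄ = 1 := by rw [skew_pair hQ, hQ40]; norm_num
  have hQ13 : z₁ ⬝ᵥ Q.mulVec r₃ = 1 := by rw [skew_pair hQ, hQ31]; norm_num
  have hQ14 : z₁ ⬝ᵥ Q.mulVec r₄ = 0 := by rw [skew_pair hQ, hQ41, neg_zero]
  have hQ23 : z₀ ⬝ᵥ Q.mulVec r₃ = 0 := by rw [skew_pair hQ, hQ32, neg_zero]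
  have hQ24 : z₀ ⬝ᵥ Q.mulVec r₄ = 0 := by rw [skew_pair hQ, hQ42, neg_zero]
  have hQ34 : r₃ ⬝ᵥ Q.mulVec r₄ = 0 := by
    rw [hr4dot, ← hβ, hQ32, hQ31]; ring
  have hQ43 : r₄ ⬝ᵥ Q.mulVec r₃ = 0 := by rw [skew_pair hQ, hQ34, neg_zero]
  -- rows of X
  set rr : Fin 5 → Fin 5 → ℂ := ![z₂, z₁, z₀, r₃, r₄] with hrr
  have hrows : LinearIndependent ℂ rr := by
    rw [Fintype.linearIndependent_iff]
    intro g hg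
    have hd0 : (∑ i, g i • rr i) ⬝ᵥ P.mulVec z₀ = 0 := by rw [hg, zero_dotProduct]
    rw [sum_dot, Fin.sum_univ_five] at hd0
    rw [show rr 0 = z₂ from rfl, show rr 1 = z₁ from rfl, show rr 2 = z₀ from rfl,
      show rr 3 = r₃ from rfl, show rr 4 = r₄ from rfl] at hd0
    rw [hP02, hP12, hP22, hP32, hP42] at hd0
    have hg3 : g 3 = 0 := by
      have : -(g 3) = 0 := by linear_combination hd0
      simpa using this
    have hd1 : (∑ i, g i • rr i) ⬝ᵥ P.mulVec z₁ = 0 := by rw [hg, zero_dotProduct]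
    rw [sum_dot, Fin.sum_univ_five] at hd1
    rw [show rr 0 = z₂ from rfl, show rr 1 = z₁ from rfl, show rr 2 = z₀ from rfl,
      show rr 3 = r₃ from rfl, show rr 4 = r₄ from rfl] at hd1
    rw [hP01, hP11, hP21, hP31, hP41] at hd1
    have hg4 : g 4 = 0 := by
      have : -(g 4) = 0 := by linear_combination hd1
      simpa using this
    have hsum3 : g 2 • z₀ + g 1 • z₁ + g 0 • z₂ = 0 := by
      rw [Fin.sum_univ_five] at hg
      rw [show rr 0 = z₂ from rfl, show rr 1 = z₁ from rfl, show rr 2 = z₀ from rfl,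
        show rr 3 = r₃ from rfl, show rr 4 = r₄ from rfl] at hg
      rw [hg3, hg4] at hg
      simp only [zero_smul, add_zero] at hg
      rw [← hg]
      abel
    have h012 := Fintype.linearIndependent_iff.mp hzind ![g 2, g 1, g 0] (by
      rw [Fin.sum_univ_three]
      simpa using hsum3)
    intro i
    fin_cases i
    · simpa using h012 2
    · simpa using h012 1
    · simpa using h012 0
    · exact hg3
    · exact hg4
  set X : Matrix (Fin 5) (Fin 5) ℂ := Matrix.of rr with hX
  have hXunit : IsUnit X := rows_indep_isUnit rr hrows
  -- pencil independence
  have hindPQ : LinearIndependent ℂ ![P, Q] := by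
    rw [linearIndependent_fin2]
    constructor
    · intro h
      simp only [Matrix.cons_val_one, Matrix.head_cons, Matrix.cons_val_zero] at h
      have h4 := hrkPQ 0 1 (by norm_num)
      rw [h] at h4
      simp [Matrix.rank_zero] at h4
    · intro a ha
      simp only [Matrix.cons_val_one, Matrix.head_cons, Matrix.cons_val_zero] at ha
      have h4 := hrkPQ 1 (-a) (by norm_num)
      have hz : (1 : ℂ) • P + (-a) • Q = 0 := by
        rw [one_smul, neg_smul, ← ha]
        abel
      rw [hz] at h4
      simp [Matrix.rank_zero] at h4
  refine ⟨X, P, Q, hXunit, hspan, hindPQ, ?_, ?_⟩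
  · ext i j
    rw [show X * P * Xᵀ = Matrix.of rr * P * (Matrix.of rr)ᵀ from rfl, conj_entry]
    fin_cases i <;> fin_cases j
    · show z₂ ⬝ᵥ P.mulVec z₂ = _
      rw [hP00]; simp [skewS, Matrix.single]
    · show z₂ ⬝ᵥ P.mulVec z₁ = _
      rw [hP01]; simp [skewS, Matrix.single]
    · show z₂ ⬝ᵥ P.mulVec z₀ = _
      rw [hP02]; simp [skewS, Matrix.single]
    · show z₂ ⬝ᵥ P.mulVec r₃ = _
      rw [hP03]; simp [skewS, Matrix.single]
    · show z₂ ⬝ᵥ P.mulVec r₄ = _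
      rw [hP04]; simp [skewS, Matrix.single]
    · show z₁ ⬝ᵥ P.mulVec z₂ = _
      rw [hP10]; simp [skewS, Matrix.single]
    · show z₁ ⬝ᵥ P.mulVec z₁ = _
      rw [hP11]; simp [skewS, Matrix.single]
    · show z₁ ⬝ᵥ P.mulVec z₀ = _
      rw [hP12]; simp [skewS, Matrix.single]
    · show z₁ ⬝ᵥ P.mulVec r₃ = _
      rw [hP13]; simp [skewS, Matrix.single]
    · show z₁ ⬝ᵥ P.mulVec r₄ = _
      rw [hP14]; simp [skewS, Matrix.single]
    · show z₀ ⬝ᵥ P.mulVec z₂ = _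
      rw [hP20]; simp [skewS, Matrix.single]
    · show z₀ ⬝ᵥ P.mulVec z₁ = _
      rw [hP21]; simp [skewS, Matrix.single]
    · show z₀ ⬝ᵥ P.mulVec z₀ = _
      rw [hP22]; simp [skewS, Matrix.single]
    · show z₀ ⬝ᵥ P.mulVec r₃ = _
      rw [hP23]; simp [skewS, Matrix.single]
    · show z₀ ⬝ᵥ P.mulVec r₄ = _
      rw [hP24]; simp [skewS, Matrix.single]
    · show r₃ ⬝ᵥ P.mulVec z₂ = _
      rw [hP30]; simp [skewS, Matrix.single]
    · show r₃ ⬝ᵥ P.mulVec z₁ = _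
      rw [hP31]; simp [skewS, Matrix.single]
    · show r₃ ⬝ᵥ P.mulVec z₀ = _
      rw [hP32]; simp [skewS, Matrix.single]
    · show r₃ ⬝ᵥ P.mulVec r₃ = _
      rw [hP33]; simp [skewS, Matrix.single]
    · show r₃ ⬝ᵥ P.mulVec r₄ = _
      rw [hP34]; simp [skewS, Matrix.single]
    · show r₄ ⬝ᵥ P.mulVec z₂ = _
      rw [hP40]; simp [skewS, Matrix.single]
    · show r₄ ⬝ᵥ P.mulVec z₁ = _
      rw [hP41]; simp [skewS, Matrix.single]
    · show r₄ ⬝ᵥ P.mulVec z₀ = _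
      rw [hP42]; simp [skewS, Matrix.single]
    · show r₄ ⬝ᵥ P.mulVec r₃ = _
      rw [hP43]; simp [skewS, Matrix.single]
    · show r₄ ⬝ᵥ P.mulVec r₄ = _
      rw [hP44]; simp [skewS, Matrix.single]
  · ext i j
    rw [show X * Q * Xᵀ = Matrix.of rr * Q * (Matrix.of rr)ᵀ from rfl, conj_entry]
    fin_cases i <;> fin_cases j
    · show z₂ ⬝ᵥ Q.mulVec z₂ = _
      rw [hQ00]; simp [skewS, Matrix.single]
    · show z₂ ⬝ᵥ Q.mulVec z₁ = _
      rw [hQ01]; simp [skewS, Matrix.single]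
    · show z₂ ⬝ᵥ Q.mulVec z₀ = _
      rw [hQ02]; simp [skewS, Matrix.single]
    · show z₂ ⬝ᵥ Q.mulVec r₃ = _
      rw [hQ03]; simp [skewS, Matrix.single]
    · show z₂ ⬝ᵥ Q.mulVec r₄ = _
      rw [hQ04]; simp [skewS, Matrix.single]
    · show z₁ ⬝ᵥ Q.mulVec z₂ = _
      rw [hQ10]; simp [skewS, Matrix.single]
    · show z₁ ⬝ᵥ Q.mulVec z₁ = _
      rw [hQ11]; simp [skewS, Matrix.single]
    · show z₁ ⬝ᵥ Q.mulVec z₀ = _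
      rw [hQ12]; simp [skewS, Matrix.single]
    · show z₁ ⬝ᵥ Q.mulVec r₃ = _
      rw [hQ13]; simp [skewS, Matrix.single]
    · show z₁ ⬝ᵥ Q.mulVec r₄ = _
      rw [hQ14]; simp [skewS, Matrix.single]
    · show z₀ ⬝ᵥ Q.mulVec z₂ = _
      rw [hQ20]; simp [skewS, Matrix.single]
    · show z₀ ⬝ᵥ Q.mulVec z₁ = _
      rw [hQ21]; simp [skewS, Matrix.single]
    · show z₀ ⬝ᵥ Q.mulVec z₀ = _
      rw [hQ22]; simp [skewS, Matrix.single]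
    · show z₀ ⬝ᵥ Q.mulVec r₃ = _
      rw [hQ23]; simp [skewS, Matrix.single]
    · show z₀ ⬝ᵥ Q.mulVec r₄ = _
      rw [hQ24]; simp [skewS, Matrix.single]
    · show r₃ ⬝ᵥ Q.mulVec z₂ = _
      rw [hQ30]; simp [skewS, Matrix.single]
    · show r₃ ⬝ᵥ Q.mulVec z₁ = _
      rw [hQ31]; simp [skewS, Matrix.single]
    · show r₃ ⬝ᵥ Q.mulVec z₀ = _
      rw [hQ32]; simp [skewS, Matrix.single]
    · show r₃ ⬝ᵥ Q.mulVec r₃ = _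
      rw [hQ33]; simp [skewS, Matrix.single]
    · show r₃ ⬝ᵥ Q.mulVec r₄ = _
      rw [hQ34]; simp [skewS, Matrix.single]
    · show r₄ ⬝ᵥ Q.mulVec z₂ = _
      rw [hQ40]; simp [skewS, Matrix.single]
    · show r₄ ⬝ᵥ Q.mulVec z₁ = _
      rw [hQ41]; simp [skewS, Matrix.single]
    · show r₄ ⬝ᵥ Q.mulVec z₀ = _
      rw [hQ42]; simp [skewS, Matrix.single]
    · show r₄ ⬝ᵥ Q.mulVec r₃ = _
      rw [hQ43]; simp [skewS, Matrix.single]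
    · show r₄ ⬝ᵥ Q.mulVec r₄ = _
      rw [hQ44]; simp [skewS, Matrix.single]


theorem stmt1 (A B : Matrix (Fin 5) (Fin 5) ℂ)
    (hA : Aᵀ = -A) (hB : Bᵀ = -B)
    (hker : ∀ x : Fin 5 → ℂ, A.mulVec x = 0 → B.mulVec x = 0 → x = 0)
    (hrank : ∀ μ lam : ℂ, ¬(μ = 0 ∧ lam = 0) → 4 ≤ (μ • A + lam • B).rank) :
    ∃ X A' B' : Matrix (Fin 5) (Fin 5) ℂ,
      IsUnit X ∧
      Submodule.span ℂ ({A', B'} : Set (Matrix (Fin 5) (Fin 5) ℂ))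
        = Submodule.span ℂ ({A, B} : Set (Matrix (Fin 5) (Fin 5) ℂ)) ∧
      LinearIndependent ℂ ![A', B'] ∧
      X * A' * Xᵀ = skewS 1 4 + skewS 2 3 ∧
      X * B' * Xᵀ = skewS 0 4 + skewS 1 3 := by
  have hrA : 4 ≤ A.rank := by
    have := hrank 1 0 (by norm_num)
    simpa using this
  have hrB : 4 ≤ B.rank := by
    have := hrank 0 1 (by norm_num)
    simpa using this
  obtain ⟨x₀, hx00, hBx0⟩ := exists_kernel_vec B hB
  have hAx0 : A.mulVec x₀ ≠ 0 := fun h => hx00 (hker x₀ h hBx0)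
  have hsolv := solv B hB hrB hx00 hBx0
  obtain ⟨x₁, hx1⟩ := hsolv (A.mulVec x₀) (skew_self hA x₀)
  have ha01 : x₀ ⬝ᵥ A.mulVec x₁ = 0 := by
    rw [skew_pair hA, ← hx1, skew_self hB, neg_zero]
  obtain ⟨x₂, hx2⟩ := hsolv (A.mulVec x₁) ha01
  have ha12 : x₁ ⬝ᵥ A.mulVec x₂ = 0 := by
    rw [skew_pair hA, ← hx2, skew_self hB, neg_zero]
  have ha02 : x₀ ⬝ᵥ A.mulVec x₂ = 0 := by
    rw [skew_pair hA, ← hx1, skew_pair hB, hx2, skew_self hA]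
    norm_num
  obtain ⟨x₃, hx3⟩ := hsolv (A.mulVec x₂) ha02
  have ha13 : x₁ ⬝ᵥ A.mulVec x₃ = 0 := by
    rw [skew_pair hA, ← hx2, skew_pair hB, hx3, skew_self hA]
    norm_num
  have ha03 : x₀ ⬝ᵥ A.mulVec x₃ = 0 := by
    rw [skew_pair hA, ← hx1, skew_pair hB, hx3, ha12]
    norm_num
  have ha23 : x₂ ⬝ᵥ A.mulVec x₃ = 0 := by
    rw [skew_pair hA, ← hx3, skew_self hB]
    norm_num
  -- independence of x₀, x₁, x₂
  have hx3ind : LinearIndependent ℂ ![x₀, x₁, x₂] := by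
    rw [Fintype.linearIndependent_iff]
    intro g hg
    rw [Fin.sum_univ_three] at hg
    rw [show (![x₀, x₁, x₂] : Fin 3 → Fin 5 → ℂ) 0 = x₀ from rfl,
      show (![x₀, x₁, x₂] : Fin 3 → Fin 5 → ℂ) 1 = x₁ from rfl,
      show (![x₀, x₁, x₂] : Fin 3 → Fin 5 → ℂ) 2 = x₂ from rfl] at hg
    rcases eq_or_ne (g 2) 0 with hg2 | hg2
    · rcases eq_or_ne (g 1) 0 with hg1 | hg1
      · have hg0 : g 0 = 0 := by
          rw [hg1, hg2, zero_smul, zero_smul, add_zero, add_zero] at hg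
          by_contra hne
          apply hx00
          have := congrArg (fun y => (g 0)⁻¹ • y) hg
          simpa [smul_smul, inv_mul_cancel₀ hne] using this
        intro i
        fin_cases i
        · exact hg0
        · exact hg1
        · exact hg2
      · exfalso
        apply hAx0
        have hx1eq : x₁ = (-(g 0) / g 1) • x₀ := by
          rw [hg2, zero_smul, add_zero] at hg
          have := congrArg (fun y => (g 1)⁻¹ • y) hg
          simp only [smul_add, smul_smul, inv_mul_cancel₀ hg1, one_smul, smul_zero] at this
          have h2 : x₁ = -((g 1)⁻¹ * g 0) • x₀ := by
            have h3 := congrArg (fun y => y - (g 1)⁻¹ • (g 0 • x₀)) this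
            simp only [add_sub_cancel_left, zero_sub, smul_smul] at h3
            rw [h3]
            module
          rw [h2]
          congr 1
          field_simp
        rw [← hx1, hx1eq, Matrix.mulVec_smul, hBx0, smul_zero]
    · exfalso
      have hx2ab : x₂ = (-(g 0) / g 2) • x₀ + (-(g 1) / g 2) • x₁ := by
        have := congrArg (fun y => (g 2)⁻¹ • y) hg
        simp only [smul_add, smul_smul, inv_mul_cancel₀ hg2, one_smul, smul_zero] at this
        have h3 := congrArg (fun y => y - (g 2)⁻¹ • (g 0 • x₀) - (g 2)⁻¹ • (g 1 • x₁)) this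
        simp only [smul_smul] at h3
        have h4 : x₂ = -((g 2)⁻¹ * g 0) • x₀ + -((g 2)⁻¹ * g 1) • x₁ := by
          rw [← sub_eq_zero]
          rw [← sub_eq_zero] at h3
          · linear_combination (norm := module) h3
        rw [h4]
        have e1 : -((g 2)⁻¹ * g 0) = -(g 0) / g 2 := by field_simp
        have e2 : -((g 2)⁻¹ * g 1) = -(g 1) / g 2 := by field_simp
        rw [e1, e2]
      set b2 : ℂ := -(g 1) / g 2 with hb2
      refine degen A B hA hB hrank x₀ (x₁ - b2 • x₀) hBx0 ?_ ?_ hAx0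
      · rw [Matrix.mulVec_sub, Matrix.mulVec_smul, ← hx2, ← hx1,
          ← Matrix.mulVec_smul, ← Matrix.mulVec_sub]
        have hxx : x₂ - b2 • x₁ = (-(g 0) / g 2) • x₀ := by
          rw [hx2ab]
          module
        rw [hxx, Matrix.mulVec_smul, hBx0, smul_zero]
      · rw [Matrix.mulVec_sub, Matrix.mulVec_smul, hBx0, smul_zero, sub_zero]
        exact hx1
  -- x₃ lies in the span of x₀, x₁, x₂
  have hnot4 : ¬ LinearIndependent ℂ ![x₃, x₀, x₁, x₂] := by
    intro h4
    have htab : ∀ i j, (![x₃, x₀, x₁, x₂] : Fin 4 → Fin 5 → ℂ) i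
        ⬝ᵥ A.mulVec ((![x₃, x₀, x₁, x₂] : Fin 4 → Fin 5 → ℂ) j) = 0 := by
      intro i j
      fin_cases i <;> fin_cases j
      · exact skew_self hA x₃
      · show x₃ ⬝ᵥ A.mulVec x₀ = 0
        rw [skew_pair hA, ha03, neg_zero]
      · show x₃ ⬝ᵥ A.mulVec x₁ = 0
        rw [skew_pair hA, ha13, neg_zero]
      · show x₃ ⬝ᵥ A.mulVec x₂ = 0
        rw [skew_pair hA, ha23, neg_zero]
      · exact ha03
      · exact skew_self hA x₀
      · exact ha01
      · exact ha02
      · exact ha13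
      · show x₁ ⬝ᵥ A.mulVec x₀ = 0
        rw [skew_pair hA, ha01, neg_zero]
      · exact skew_self hA x₁
      · exact ha12
      · exact ha23
      · show x₂ ⬝ᵥ A.mulVec x₀ = 0
        rw [skew_pair hA, ha02, neg_zero]
      · show x₂ ⬝ᵥ A.mulVec x₁ = 0
        rw [skew_pair hA, ha12, neg_zero]
      · exact skew_self hA x₂
    have hle := isotropic_four A ![x₃, x₀, x₁, x₂] h4 htab
    omega
  have hx3span : x₃ ∈ Submodule.span ℂ (Set.range ![x₀, x₁, x₂]) := by
    by_contra hmem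
    exact hnot4 (linearIndependent_fin_cons.mpr ⟨hx3ind, hmem⟩)
  obtain ⟨cf, hcf⟩ := (Submodule.mem_span_range_iff_exists_fun ℂ).mp hx3span
  rw [Fin.sum_univ_three] at hcf
  rw [show (![x₀, x₁, x₂] : Fin 3 → Fin 5 → ℂ) 0 = x₀ from rfl,
    show (![x₀, x₁, x₂] : Fin 3 → Fin 5 → ℂ) 1 = x₁ from rfl,
    show (![x₀, x₁, x₂] : Fin 3 → Fin 5 → ℂ) 2 = x₂ from rfl] at hcf
  have hrel : A.mulVec x₂ = cf 1 • A.mulVec x₀ + cf 2 • A.mulVec x₁ := by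
    rw [← hx3, ← hcf, Matrix.mulVec_add, Matrix.mulVec_add, Matrix.mulVec_smul,
      Matrix.mulVec_smul, Matrix.mulVec_smul, hBx0, hx1, hx2, smul_zero, zero_add]
  set γ : ℂ := cf 2 / 2 with hγ
  set δ : ℂ := cf 1 + γ ^ 2 with hδdef
  have hcc : cf 2 = 2 * γ := by rw [hγ]; field_simp
  have hbb : cf 1 = δ - γ ^ 2 := by rw [hδdef]; ring
  set P1 : Matrix (Fin 5) (Fin 5) ℂ := A + (-γ) • B with hP1
  have hP1skew : P1ᵀ = -P1 := by
    rw [hP1, Matrix.transpose_add, Matrix.transpose_smul, hA, hB]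
    ext i j
    simp
    ring
  have hP1mul : ∀ x, P1.mulVec x = A.mulVec x + (-γ) • B.mulVec x := by
    intro x
    rw [hP1, Matrix.add_mulVec, Matrix.smul_mulVec]
  have hrk1 : ∀ κ ν : ℂ, ¬(κ = 0 ∧ ν = 0) → 4 ≤ (κ • P1 + ν • B).rank := by
    intro κ ν h
    have heq : κ • P1 + ν • B = κ • A + (ν - κ * γ) • B := by
      rw [hP1]
      ext i j
      simp [Matrix.add_apply, Matrix.smul_apply, smul_eq_mul]
      ring
    rw [heq]
    apply hrank
    rintro ⟨h1, h2⟩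
    apply h
    refine ⟨h1, ?_⟩
    rw [h1] at h2
    simpa using h2
  have hrk2 : ∀ κ ν : ℂ, ¬(κ = 0 ∧ ν = 0) → 4 ≤ (κ • B + ν • P1).rank := by
    intro κ ν h
    have heq : κ • B + ν • P1 = ν • A + (κ - ν * γ) • B := by
      rw [hP1]
      ext i j
      simp [Matrix.add_apply, Matrix.smul_apply, smul_eq_mul]
      ring
    rw [heq]
    apply hrank
    rintro ⟨h1, h2⟩
    apply h
    refine ⟨?_, h1⟩
    rw [h1] at h2
    simpa using h2
  have hker1 : ∀ x, P1.mulVec x = 0 → B.mulVec x = 0 → x = 0 := by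
    intro x h1 h2
    refine hker x ?_ h2
    have hAx : A.mulVec x = P1.mulVec x + γ • B.mulVec x := by
      rw [hP1mul]
      module
    rw [hAx, h1, h2, smul_zero, add_zero]
  have hspan1 : Submodule.span ℂ ({P1, B} : Set (Matrix (Fin 5) (Fin 5) ℂ))
      = Submodule.span ℂ ({A, B} : Set (Matrix (Fin 5) (Fin 5) ℂ)) := by
    apply le_antisymm
    · rw [Submodule.span_le]
      rintro x (rfl | rfl)
      · exact Submodule.mem_span_pair.mpr ⟨1, -γ, by rw [hP1]; module⟩
      · exact Submodule.subset_span (by simp)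
    · rw [Submodule.span_le]
      rintro x (rfl | rfl)
      · exact Submodule.mem_span_pair.mpr ⟨1, γ, by rw [hP1]; module⟩
      · exact Submodule.subset_span (by simp)
  have hspan2 : Submodule.span ℂ ({B, P1} : Set (Matrix (Fin 5) (Fin 5) ℂ))
      = Submodule.span ℂ ({A, B} : Set (Matrix (Fin 5) (Fin 5) ℂ)) := by
    apply le_antisymm
    · rw [Submodule.span_le]
      rintro x (rfl | rfl)
      · exact Submodule.subset_span (by simp)
      · exact Submodule.mem_span_pair.mpr ⟨1, -γ, by rw [hP1]; module⟩
    · rw [Submodule.span_le]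
      rintro x (rfl | rfl)
      · exact Submodule.mem_span_pair.mpr ⟨γ, 1, by rw [hP1]; module⟩
      · exact Submodule.subset_span (by simp)
  rcases eq_or_ne δ 0 with hδ0 | hδ0
  · refine assemble A B P1 B hP1skew hB hrk1 hspan1 x₀ x₁ (x₂ - γ • x₁) hx00 hBx0 ?_ ?_ ?_ hker1
    · rw [hP1mul, hBx0, smul_zero, add_zero]
      exact hx1
    · rw [Matrix.mulVec_sub, Matrix.mulVec_smul, hx2, hP1mul, hx1]
      module
    · rw [hP1mul]
      simp only [Matrix.mulVec_sub, Matrix.mulVec_smul]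
      rw [hrel, hx2, hx1, hcc, hbb, hδ0]
      module
  · refine assemble A B B P1 hB hP1skew hrk2 hspan2 (x₂ - γ • x₁ - δ • x₀) x₁ x₀ ?_ ?_ ?_ ?_ hBx0
      (fun x h1 h2 => hker1 x h2 h1)
    · intro h0
      have h1 := Fintype.linearIndependent_iff.mp hx3ind ![-δ, -γ, 1] (by
        rw [Fin.sum_univ_three]
        show (-δ) • x₀ + (-γ) • x₁ + (1 : ℂ) • x₂ = 0
        have heq : (-δ) • x₀ + (-γ) • x₁ + (1 : ℂ) • x₂ = x₂ - γ • x₁ - δ • x₀ := by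
          module
        rw [heq, h0])
      have h2 : (1 : ℂ) = 0 := h1 2
      norm_num at h2
    · rw [hP1mul]
      simp only [Matrix.mulVec_sub, Matrix.mulVec_smul]
      rw [hrel, hx2, hx1, hBx0, hcc, hbb]
      module
    · rw [hP1mul]
      simp only [Matrix.mulVec_sub, Matrix.mulVec_smul]
      rw [hx2, hBx0, hx1]
      module
    · rw [hP1mul, hBx0, smul_zero, add_zero, hx1]

end
end

section
/- Let r ≥ 1, and let A and B be skew-symmetric 2r×2r complex matrices with A invertible, such that the polynomial det(B − tA) has exactly r distinct roots c₁, …, c_r, each of multiplicity two. Then there exists an invertible 2r×2r complex matrix X such that X A Xᵀ = Σ_{i=1}^{r} S_{2i−1,2i} and X B Xᵀ = Σ_{i=1}^{r} c_i · S_{2i−1,2i}. -/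
open Matrix Polynomial

namespace Stmt4Aux

lemma charmatrix_eq {n : ℕ} (N : Matrix (Fin n) (Fin n) ℂ) :
    charmatrix N = (X : ℂ[X]) • (1 : Matrix (Fin n) (Fin n) ℂ[X]) - N.map C := by
  ext i j
  by_cases h : i = j
  · subst h; simp [charmatrix_apply, Matrix.one_apply, Matrix.smul_apply]
  · simp [charmatrix_apply_ne _ _ _ h, Matrix.one_apply_ne h, Matrix.smul_apply,
      Matrix.diagonal_apply_ne _ h]

lemma charpoly_sub_smul_one {n : ℕ} (N : Matrix (Fin n) (Fin n) ℂ) (μ : ℂ) :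
    (N - μ • 1).charpoly = N.charpoly.comp (X + C μ) := by
  have h : charmatrix (N - μ • (1 : Matrix (Fin n) (Fin n) ℂ))
      = (charmatrix N).map (eval₂RingHom C (X + C μ) : ℂ[X] →+* ℂ[X]) := by
    ext i j
    by_cases hij : i = j
    · subst hij
      simp [charmatrix_apply_eq, Matrix.sub_apply, Matrix.smul_apply, Matrix.one_apply,
        map_sub, eval₂_X, eval₂_C]
      ring
    · simp [charmatrix_apply_ne _ _ _ hij, Matrix.sub_apply, Matrix.smul_apply,
        Matrix.one_apply_ne hij, eval₂_C]
  rw [Matrix.charpoly, h, ← RingHom.mapMatrix_apply, ← RingHom.map_det]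
  rfl

lemma maxGen_shift {n : ℕ} (f : Module.End ℂ (Fin n → ℂ)) (μ : ℂ) :
    f.maxGenEigenspace μ = (f - μ • 1).maxGenEigenspace 0 := by
  ext x
  simp [Module.End.mem_maxGenEigenspace, zero_smul, sub_zero]

lemma endo_charpoly {n : ℕ} (N : Matrix (Fin n) (Fin n) ℂ) :
    (Matrix.toLin' N : Module.End ℂ (Fin n → ℂ)).charpoly = N.charpoly := by
  rw [← LinearMap.charpoly_toMatrix (Matrix.toLin' N) (Pi.basisFun ℂ (Fin n)),
    LinearMap.toMatrix_eq_toMatrix', LinearMap.toMatrix'_toLin']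

lemma finrank_maxGen {n : ℕ} (N : Matrix (Fin n) (Fin n) ℂ) (μ : ℂ) :
    Module.finrank ℂ (Module.End.maxGenEigenspace (Matrix.toLin' N) μ)
      = N.charpoly.rootMultiplicity μ := by
  rw [maxGen_shift]
  have h1 : (Matrix.toLin' N - μ • 1 : Module.End ℂ (Fin n → ℂ))
      = Matrix.toLin' (N - μ • 1) := by
    rw [map_sub]
    congr 1
    ext x i
    simp [Matrix.toLin'_apply, Matrix.smul_mulVec, Matrix.one_mulVec]
  rw [h1, LinearMap.finrank_maxGenEigenspace_zero_eq, endo_charpoly, charpoly_sub_smul_one,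
    rootMultiplicity_eq_natTrailingDegree]

lemma rootMult_prod {r : ℕ} (c : Fin r → ℂ) (hc : Function.Injective c) (i : Fin r) :
    (∏ j : Fin r, (X - C (c j)) ^ 2).rootMultiplicity (c i) = 2 := by
  classical
  rw [← Finset.mul_prod_erase Finset.univ _ (Finset.mem_univ i)]
  have h1 : ((X - C (c i)) ^ 2 : ℂ[X]) ≠ 0 := pow_ne_zero _ (X_sub_C_ne_zero _)
  have h2 : (∏ j ∈ Finset.univ.erase i, ((X:ℂ[X]) - C (c j)) ^ 2) ≠ 0 :=
    Finset.prod_ne_zero_iff.mpr fun j _ => pow_ne_zero _ (X_sub_C_ne_zero _)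
  rw [rootMultiplicity_mul (mul_ne_zero h1 h2), rootMultiplicity_X_sub_C_pow]
  have : (∏ j ∈ Finset.univ.erase i, ((X:ℂ[X]) - C (c j)) ^ 2).rootMultiplicity (c i) = 0 := by
    rw [rootMultiplicity_eq_zero]
    intro hroot
    rw [IsRoot.def, eval_prod] at hroot
    obtain ⟨j, hj, hj0⟩ := Finset.prod_eq_zero_iff.mp hroot
    simp only [eval_pow, eval_sub, eval_X, eval_C] at hj0
    have : c i = c j := by
      exact sub_eq_zero.mp (pow_eq_zero_iff (n := 2) (by norm_num) |>.mp hj0)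
    exact (Finset.ne_of_mem_erase hj) (hc this.symm)
  omega

lemma charpoly_M {n : ℕ} (hn : Even n) (A B : Matrix (Fin n) (Fin n) ℂ)
    (hdet : IsUnit A.det) (p : ℂ[X])
    (hroots : (B.map C - (X : ℂ[X]) • A.map C).det = C A.det * p) :
    (A⁻¹ * B).charpoly = p := by
  have hAM : A * (A⁻¹ * B) = B := by
    rw [← Matrix.mul_assoc, Matrix.mul_nonsing_inv A hdet, Matrix.one_mul]
  have key : A.map C * charmatrix (A⁻¹ * B)
      = -(B.map C - (X : ℂ[X]) • A.map C) := by
    rw [charmatrix_eq, Matrix.mul_sub, Matrix.mul_smul, Matrix.mul_one,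
      ← Matrix.map_mul, hAM]
    abel
  have hdets : C A.det * (A⁻¹ * B).charpoly = C A.det * p := by
    have := congrArg Matrix.det key
    rw [Matrix.det_mul, Matrix.det_neg, hroots] at this
    rw [Fintype.card_fin, hn.neg_one_pow, one_mul] at this
    rw [← this, Matrix.charpoly]
    congr 1
    rw [RingHom.map_det, RingHom.mapMatrix_apply]
  exact mul_left_cancel₀ (by simpa using hdet.ne_zero) hdets

lemma orth_aux {n : ℕ} (A : Matrix (Fin n) (Fin n) ℂ) (f : Module.End ℂ (Fin n → ℂ))
    (hsa : ∀ x y, (f x) ⬝ᵥ (A *ᵥ y) = x ⬝ᵥ (A *ᵥ (f y))) :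
    ∀ (K k l : ℕ), k + l ≤ K → ∀ (μ ν : ℂ), μ ≠ ν → ∀ x y,
      ((f - μ • 1) ^ k) x = 0 → ((f - ν • 1) ^ l) y = 0 → x ⬝ᵥ (A *ᵥ y) = 0 := by
  intro K
  induction K with
  | zero =>
    intro k l hkl μ ν hμν x y hx hy
    obtain ⟨rfl, rfl⟩ : k = 0 ∧ l = 0 := by omega
    simp only [pow_zero, Module.End.one_apply] at hx
    subst hx
    simp
  | succ K ih =>
    intro k l hkl μ ν hμν x y hx hy
    match k, l with
    | 0, l =>
      simp only [pow_zero, Module.End.one_apply] at hx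
      subst hx; simp
    | k + 1, 0 =>
      simp only [pow_zero, Module.End.one_apply] at hy
      subst hy; simp
    | k + 1, l + 1 =>
      have hx' : ((f - μ • 1) ^ k) ((f - μ • 1) x) = 0 := by
        rw [← Module.End.mul_apply, ← pow_succ]; exact hx
      have hy' : ((f - ν • 1) ^ l) ((f - ν • 1) y) = 0 := by
        rw [← Module.End.mul_apply, ← pow_succ]; exact hy
      have h1 : ((f - μ • 1) x) ⬝ᵥ (A *ᵥ y) = 0 :=
        ih k (l + 1) (by omega) μ ν hμν _ _ hx' hy
      have h2 : x ⬝ᵥ (A *ᵥ ((f - ν • 1) y)) = 0 :=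
        ih (k + 1) l (by omega) μ ν hμν _ _ hx hy'
      simp only [LinearMap.sub_apply, LinearMap.smul_apply, Module.End.one_apply,
        sub_dotProduct, smul_dotProduct, Matrix.mulVec_sub,
        Matrix.mulVec_smul, dotProduct_sub, dotProduct_smul,
        smul_eq_mul, sub_eq_zero] at h1 h2
      rw [hsa] at h1
      have : (μ - ν) * (x ⬝ᵥ (A *ᵥ y)) = 0 := by rw [sub_mul, ← h1, ← h2, sub_self]
      rcases mul_eq_zero.mp this with h | h
      · exact absurd (sub_eq_zero.mp h) hμν
      · exact h

lemma exists_eigvec {n : ℕ} (f : Module.End ℂ (Fin n → ℂ)) (μ : ℂ)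
    (p : Submodule ℂ (Fin n → ℂ))
    (hp : ∀ x ∈ p, (f - μ • 1) x ∈ p) :
    ∀ (k : ℕ) (x : Fin n → ℂ), x ≠ 0 → x ∈ p → ((f - μ • 1) ^ k) x = 0 →
      ∃ v, v ≠ 0 ∧ v ∈ p ∧ f v = μ • v := by
  intro k
  induction k with
  | zero =>
    intro x hx _ h
    simp only [pow_zero, Module.End.one_apply] at h
    exact absurd h hx
  | succ k ih =>
    intro x hx hxp h
    by_cases h0 : (f - μ • 1) x = 0
    · refine ⟨x, hx, hxp, ?_⟩
      have h0' : f x - μ • x = 0 := by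
        simpa [LinearMap.sub_apply, LinearMap.smul_apply, Module.End.one_apply] using h0
      exact sub_eq_zero.mp h0'
    · have h' : ((f - μ • 1) ^ k) ((f - μ • 1) x) = 0 := by
        rw [← Module.End.mul_apply, ← pow_succ]; exact h
      exact ih _ h0 (hp x hxp) h'

lemma skewS_apply {n : ℕ} (i j k l : Fin n) :
    skewS i j k l = (if i = k ∧ j = l then (1:ℂ) else 0) - (if j = k ∧ i = l then 1 else 0) := by
  simp [skewS, Matrix.single, Matrix.sub_apply]

variable {r : ℕ}

def idx (k : Fin (2*r)) : Fin r := ⟨(k:ℕ)/2, by have := k.isLt; omega⟩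

/-- entry pattern of the block matrix -/
noncomputable def pat (k l : Fin (2*r)) : ℂ :=
  if (l:ℕ) = (k:ℕ)+1 ∧ (k:ℕ) % 2 = 0 then 1
  else if (k:ℕ) = (l:ℕ)+1 ∧ (l:ℕ) % 2 = 0 then -1 else 0

lemma sum_skew_apply (d : Fin r → ℂ) (k l : Fin (2*r)) :
    (∑ i : Fin r, d i • skewS (⟨2*(i:ℕ), by have := i.isLt; omega⟩ : Fin (2*r)) ⟨2*(i:ℕ)+1, by have := i.isLt; omega⟩) k l
      = d (idx l) * pat k l := by
  rw [Matrix.sum_apply]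
  rw [Finset.sum_eq_single (idx l)]
  · have hl := l.isLt
    have hk := k.isLt
    simp only [Matrix.smul_apply, skewS_apply, smul_eq_mul, pat, idx, Fin.ext_iff]
    split_ifs <;> (try ring) <;> omega
  · intro j _ hj
    have hjl : (2*(j:ℕ) ≠ (l:ℕ)) ∧ (2*(j:ℕ)+1 ≠ (l:ℕ)) := by
      constructor <;> intro h <;> exact hj (by simp only [idx, Fin.ext_iff]; omega)
    simp only [Matrix.smul_apply, skewS_apply, smul_eq_mul, Fin.ext_iff]
    rw [if_neg (by push_neg; intro _; simpa using hjl.2),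
      if_neg (by push_neg; intro _; simpa using hjl.1)]
    ring
  · intro h; exact absurd (Finset.mem_univ _) h

def pk (k : Fin (2*r)) : Fin (2*r) := ⟨(k:ℕ)+1 - 2*((k:ℕ)%2), by have := k.isLt; omega⟩

lemma P_mul_P :
    (∑ i : Fin r, skewS (⟨2*(i:ℕ), by have := i.isLt; omega⟩ : Fin (2*r)) ⟨2*(i:ℕ)+1, by have := i.isLt; omega⟩)
      * (∑ i : Fin r, skewS (⟨2*(i:ℕ), by have := i.isLt; omega⟩ : Fin (2*r)) ⟨2*(i:ℕ)+1, by have := i.isLt; omega⟩) = -1 := by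
  have hP : ∀ a b : Fin (2*r),
      (∑ i : Fin r, skewS (⟨2*(i:ℕ), by have := i.isLt; omega⟩ : Fin (2*r)) ⟨2*(i:ℕ)+1, by have := i.isLt; omega⟩) a b
        = pat a b := by
    intro a b
    have := sum_skew_apply (fun _ => (1:ℂ)) a b
    simpa using this
  ext k l
  rw [Matrix.mul_apply]
  simp only [hP]
  rw [Finset.sum_eq_single (pk k)]
  · have hk := k.isLt
    have hl := l.isLt
    simp only [pat, pk, Matrix.neg_apply, Matrix.one_apply, Fin.ext_iff]
    repeat' split_ifs <;> (try ring) <;> (try (exfalso; omega))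
  · intro m _ hm
    have hm' : (m:ℕ) ≠ (k:ℕ)+1 - 2*((k:ℕ)%2) := fun h => hm (Fin.ext h)
    have hk := k.isLt
    have hmlt := m.isLt
    have : pat k m = 0 := by
      simp only [pat]
      split_ifs <;> (try ring) <;> (exfalso; omega)
    rw [this, zero_mul]
  · intro h; exact absurd (Finset.mem_univ _) h

end Stmt4Aux

theorem stmt4 (r : ℕ) (hr : 1 ≤ r) (A B : Matrix (Fin (2 * r)) (Fin (2 * r)) ℂ)
    (hA : Aᵀ = -A) (hB : Bᵀ = -B) (hAinv : IsUnit A)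
    (c : Fin r → ℂ) (hc : Function.Injective c)
    (hroots : (B.map Polynomial.C - (Polynomial.X : Polynomial ℂ) • A.map Polynomial.C).det
        = Polynomial.C A.det * ∏ i : Fin r, (Polynomial.X - Polynomial.C (c i)) ^ 2) :
    ∃ X : Matrix (Fin (2 * r)) (Fin (2 * r)) ℂ, IsUnit X ∧
      X * A * Xᵀ = ∑ i : Fin r,
        skewS (⟨2 * (i : ℕ), by omega⟩ : Fin (2 * r)) ⟨2 * (i : ℕ) + 1, by omega⟩ ∧
      X * B * Xᵀ = ∑ i : Fin r,
        c i • skewS (⟨2 * (i : ℕ), by omega⟩ : Fin (2 * r)) ⟨2 * (i : ℕ) + 1, by omega⟩ := by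
  classical
  have hdetA : IsUnit A.det := (Matrix.isUnit_iff_isUnit_det A).mp hAinv
  have hAA : A * A⁻¹ = 1 := Matrix.mul_nonsing_inv A hdetA
  have hA'A : A⁻¹ * A = 1 := Matrix.nonsing_inv_mul A hdetA
  set M : Matrix (Fin (2*r)) (Fin (2*r)) ℂ := A⁻¹ * B with hMdef
  have hAM : A * M = B := by rw [hMdef, ← Matrix.mul_assoc, hAA, Matrix.one_mul]
  have hMTA : Mᵀ * A = B := by
    have hAiT : (A⁻¹)ᵀ = -(A⁻¹) := by
      rw [Matrix.transpose_nonsing_inv, hA]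
      apply Matrix.inv_eq_right_inv
      rw [Matrix.neg_mul, Matrix.mul_neg, neg_neg, hAA]
    rw [hMdef, Matrix.transpose_mul, hB, hAiT, Matrix.neg_mul, Matrix.mul_neg, neg_neg,
      Matrix.mul_assoc, hA'A, Matrix.mul_one]
  have hcp : M.charpoly = ∏ i : Fin r, (X - C (c i)) ^ 2 :=
    Stmt4Aux.charpoly_M (even_two_mul r) A B hdetA _ hroots
  -- bilinear form basics
  have dp : ∀ (N : Matrix (Fin (2*r)) (Fin (2*r)) ℂ) x z, (N *ᵥ x) ⬝ᵥ z = x ⬝ᵥ (Nᵀ *ᵥ z) := by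
    intro N x z
    rw [dotProduct_comm, Matrix.dotProduct_mulVec, ← Matrix.mulVec_transpose,
      dotProduct_comm]
  have hskew : ∀ x y, y ⬝ᵥ (A *ᵥ x) = -(x ⬝ᵥ (A *ᵥ y)) := by
    intro x y
    rw [dotProduct_comm, dp, hA, Matrix.neg_mulVec, dotProduct_neg]
  have hself : ∀ x, x ⬝ᵥ (A *ᵥ x) = 0 := by
    intro x
    have h := hskew x x
    linear_combination h / 2
  have hsa : ∀ x y, (Matrix.toLin' M x) ⬝ᵥ (A *ᵥ y) = x ⬝ᵥ (A *ᵥ (Matrix.toLin' M y)) := by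
    intro x y
    rw [Matrix.toLin'_apply, Matrix.toLin'_apply, dp, Matrix.mulVec_mulVec, hMTA,
      Matrix.mulVec_mulVec, hAM]
  -- generalized eigenspaces
  have hGdim : ∀ i : Fin r,
      Module.finrank ℂ (Module.End.maxGenEigenspace (Matrix.toLin' M) (c i)) = 2 := by
    intro i
    rw [Stmt4Aux.finrank_maxGen, hcp, Stmt4Aux.rootMult_prod c hc i]
  have hbotG : ∀ μ : ℂ, (∀ i, μ ≠ c i) →
      Module.End.maxGenEigenspace (Matrix.toLin' M) μ = ⊥ := by
    intro μ hμ
    by_contra hne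
    obtain ⟨x, hxG, hx0⟩ := Submodule.ne_bot_iff _ |>.mp hne
    obtain ⟨k, hk⟩ := (Module.End.mem_maxGenEigenspace _ _ _).mp hxG
    obtain ⟨v, hv0, -, hveig⟩ :=
      Stmt4Aux.exists_eigvec (Matrix.toLin' M) μ ⊤ (fun _ _ => Submodule.mem_top) k x hx0
        Submodule.mem_top hk
    have hev : Module.End.HasEigenvalue (Matrix.toLin' M) μ :=
      Module.End.hasEigenvalue_of_hasEigenvector
        ⟨Module.End.mem_eigenspace_iff.mpr hveig, hv0⟩
    have hroot : (minpoly ℂ (Matrix.toLin' M)).IsRoot μ :=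
      Module.End.isRoot_of_hasEigenvalue hev
    have hdvd : minpoly ℂ (Matrix.toLin' M) ∣ (Matrix.toLin' M : Module.End ℂ _).charpoly :=
      LinearMap.minpoly_dvd_charpoly _
    have : ((Matrix.toLin' M : Module.End ℂ _).charpoly).IsRoot μ := hroot.dvd hdvd
    rw [Stmt4Aux.endo_charpoly, hcp, IsRoot.def, eval_prod] at this
    obtain ⟨j, -, hj0⟩ := Finset.prod_eq_zero_iff.mp this
    simp only [eval_pow, eval_sub, eval_X, eval_C] at hj0
    exact hμ j (sub_eq_zero.mp (pow_eq_zero_iff (n := 2) (by norm_num) |>.mp hj0))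
  have hsup : (⨆ i : Fin r, Module.End.maxGenEigenspace (Matrix.toLin' M) (c i)) = ⊤ := by
    rw [eq_top_iff, ← Module.End.iSup_maxGenEigenspace_eq_top (Matrix.toLin' M)]
    apply iSup_le
    intro μ
    by_cases hμ : ∃ i, μ = c i
    · obtain ⟨i, rfl⟩ := hμ
      exact le_iSup (fun i => Module.End.maxGenEigenspace (Matrix.toLin' M) (c i)) i
    · push_neg at hμ
      rw [hbotG μ hμ]
      exact bot_le
  have hdecomp : ∀ x : Fin (2*r) → ℂ, ∃ g : Fin r →₀ (Fin (2*r) → ℂ),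
      (∀ i, g i ∈ Module.End.maxGenEigenspace (Matrix.toLin' M) (c i))
        ∧ (g.sum fun _ v => v) = x := by
    intro x
    exact (Submodule.mem_iSup_iff_exists_finsupp _ x).mp (hsup ▸ Submodule.mem_top)
  -- cross orthogonality
  have hGorth : ∀ i j : Fin r, i ≠ j →
      ∀ x ∈ Module.End.maxGenEigenspace (Matrix.toLin' M) (c i),
      ∀ y ∈ Module.End.maxGenEigenspace (Matrix.toLin' M) (c j), x ⬝ᵥ (A *ᵥ y) = 0 := by
    intro i j hij x hx y hy
    obtain ⟨k, hk⟩ := (Module.End.mem_maxGenEigenspace _ _ _).mp hx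
    obtain ⟨l, hl⟩ := (Module.End.mem_maxGenEigenspace _ _ _).mp hy
    exact Stmt4Aux.orth_aux A (Matrix.toLin' M) hsa (k+l) k l le_rfl (c i) (c j)
      (fun h => hij (hc h)) x y hk hl
  -- nondegeneracy on each generalized eigenspace
  have hnondeg : ∀ (i : Fin r) x, x ∈ Module.End.maxGenEigenspace (Matrix.toLin' M) (c i) →
      (∀ y ∈ Module.End.maxGenEigenspace (Matrix.toLin' M) (c i), x ⬝ᵥ (A *ᵥ y) = 0) →
      x = 0 := by
    intro i x hx h0
    have hall : ∀ z, x ⬝ᵥ (A *ᵥ z) = 0 := by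
      intro z
      obtain ⟨g, hg, hgs⟩ := hdecomp z
      let L : (Fin (2*r) → ℂ) →ₗ[ℂ] ℂ :=
        { toFun := fun z => x ⬝ᵥ (A *ᵥ z)
          map_add' := by intro a b; simp [Matrix.mulVec_add, dotProduct_add]
          map_smul' := by intro t a; simp [Matrix.mulVec_smul, dotProduct_smul] }
      have : x ⬝ᵥ (A *ᵥ z) = L z := rfl
      rw [this, ← hgs, Finsupp.sum, map_sum]
      apply Finset.sum_eq_zero
      intro j _
      by_cases hji : j = i
      · subst hji
        exact h0 _ (hg j)
      · exact hGorth i j (fun h => hji h.symm) x hx (g j) (hg j)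
    have hx0 : ∀ z, x ⬝ᵥ z = 0 := by
      intro z
      have := hall (A⁻¹ *ᵥ z)
      rwa [Matrix.mulVec_mulVec, hAA, Matrix.one_mulVec] at this
    funext idx
    have := hx0 (Pi.single idx 1)
    rwa [dotProduct_single, mul_one] at this
  -- invariance of generalized eigenspaces
  have hGinv : ∀ (i : Fin r) (μ : ℂ) z,
      z ∈ Module.End.maxGenEigenspace (Matrix.toLin' M) (c i) →
      (Matrix.toLin' M - μ • 1) z ∈ Module.End.maxGenEigenspace (Matrix.toLin' M) (c i) := by
    intro i μ z hz
    rw [Module.End.mem_maxGenEigenspace] at hz ⊢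
    obtain ⟨m, hm⟩ := hz
    refine ⟨m, ?_⟩
    have hcomm : ((Matrix.toLin' M - c i • 1) ^ m) * (Matrix.toLin' M - μ • 1)
        = (Matrix.toLin' M - μ • 1) * ((Matrix.toLin' M - c i • 1) ^ m) := by
      have h1 : Commute (Matrix.toLin' M - μ • (1 : Module.End ℂ (Fin (2*r) → ℂ)))
          (Matrix.toLin' M - c i • 1) :=
        ((Commute.refl _).sub_right ((Commute.one_right _).smul_right _)).sub_left
          (((Commute.one_left _).smul_left _).sub_right
            (((Commute.one_left _).smul_left _).smul_right _))
      exact (h1.pow_right m).symm.eq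
    rw [← Module.End.mul_apply, hcomm, Module.End.mul_apply, hm, map_zero]
  -- construction of the symplectic eigen pairs
  have hpair : ∀ i : Fin r, ∃ u v : Fin (2*r) → ℂ,
      u ∈ Module.End.maxGenEigenspace (Matrix.toLin' M) (c i) ∧
      v ∈ Module.End.maxGenEigenspace (Matrix.toLin' M) (c i) ∧
      Matrix.toLin' M u = c i • u ∧ Matrix.toLin' M v = c i • v ∧
      u ⬝ᵥ (A *ᵥ v) = 1 := by
    intro i
    have hGne : Module.End.maxGenEigenspace (Matrix.toLin' M) (c i) ≠ ⊥ := by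
      intro hbt
      have := hGdim i
      rw [hbt] at this
      simp [finrank_bot] at this
    obtain ⟨x, hxG, hx0⟩ := Submodule.ne_bot_iff _ |>.mp hGne
    obtain ⟨k, hk⟩ := (Module.End.mem_maxGenEigenspace _ _ _).mp hxG
    obtain ⟨w, hw0, hwG, hwEig⟩ :=
      Stmt4Aux.exists_eigvec (Matrix.toLin' M) (c i) _ (fun z hz => hGinv i (c i) z hz)
        k x hx0 hxG hk
    have hNw : (Matrix.toLin' M - c i • 1) w = 0 := by
      simp [LinearMap.sub_apply, hwEig]
    have hnd : ¬ (∀ y ∈ Module.End.maxGenEigenspace (Matrix.toLin' M) (c i),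
        w ⬝ᵥ (A *ᵥ y) = 0) := fun h => hw0 (hnondeg i w hwG h)
    push_neg at hnd
    obtain ⟨z, hzG, hωwz⟩ := hnd
    by_cases hzEig : Matrix.toLin' M z = c i • z
    · refine ⟨w, (w ⬝ᵥ (A *ᵥ z))⁻¹ • z, hwG, Submodule.smul_mem _ _ hzG, hwEig, ?_, ?_⟩
      · rw [LinearMap.map_smul, hzEig, smul_comm]
      · rw [Matrix.mulVec_smul, dotProduct_smul, smul_eq_mul, inv_mul_cancel₀ hωwz]
    · exfalso
      have hNz : (Matrix.toLin' M - c i • 1) z ≠ 0 := by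
        intro h
        apply hzEig
        have : Matrix.toLin' M z - c i • z = 0 := by
          simpa [LinearMap.sub_apply, LinearMap.smul_apply, Module.End.one_apply] using h
        exact sub_eq_zero.mp this
      have hli : LinearIndependent ℂ ![w, z] := by
        rw [LinearIndependent.pair_iff]
        intro s t hst
        have h1 : t • ((Matrix.toLin' M - c i • 1) z) = 0 := by
          have h2 := congrArg (fun q => (Matrix.toLin' M - c i • 1) q) hst
          simp only [map_add, LinearMap.map_smul, map_zero] at h2
          rwa [hNw, smul_zero, zero_add] at h2
        have ht : t = 0 := by
          rcases smul_eq_zero.mp h1 with h | h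
          · exact h
          · exact absurd h hNz
        subst ht
        rw [zero_smul, add_zero] at hst
        have hs : s = 0 := by
          rcases smul_eq_zero.mp hst with h | h
          · exact h
          · exact absurd h hw0
        exact ⟨hs, rfl⟩
      have hrange : Set.range ![w, z] = {w, z} := by
        ext q; simp [Fin.exists_fin_two, or_comm]
      have hle : Submodule.span ℂ {w, z}
          ≤ Module.End.maxGenEigenspace (Matrix.toLin' M) (c i) := by
        rw [Submodule.span_le, Set.insert_subset_iff, Set.singleton_subset_iff]
        exact ⟨hwG, hzG⟩
      have hfr : Module.finrank ℂ (Submodule.span ℂ ({w, z} : Set (Fin (2*r) → ℂ))) = 2 := by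
        rw [← hrange, finrank_span_eq_card hli]
        simp
      have hspan : Submodule.span ℂ ({w, z} : Set (Fin (2*r) → ℂ))
          = Module.End.maxGenEigenspace (Matrix.toLin' M) (c i) :=
        Submodule.eq_of_le_of_finrank_le hle (by rw [hfr, hGdim i])
      obtain ⟨a, b, hab⟩ := Submodule.mem_span_pair.mp (hspan ▸ hGinv i (c i) z hzG)
      have hNk : ∀ m : ℕ, ∃ a' : ℂ,
          ((Matrix.toLin' M - c i • 1) ^ (m+1)) z = a' • w + b^(m+1) • z := by
        intro m
        induction m with
        | zero => exact ⟨a, by rw [pow_one, pow_one]; exact hab.symm⟩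
        | succ m ih =>
          obtain ⟨a', ha'⟩ := ih
          refine ⟨b^(m+1) * a, ?_⟩
          have step : ((Matrix.toLin' M - c i • 1) ^ (m+2)) z
              = (Matrix.toLin' M - c i • 1) (((Matrix.toLin' M - c i • 1) ^ (m+1)) z) := by
            rw [← Module.End.mul_apply, ← pow_succ']
          rw [step, ha', map_add, LinearMap.map_smul, LinearMap.map_smul, hNw, smul_zero, zero_add, ← hab,
            smul_add, smul_smul, smul_smul, ← pow_succ]
      obtain ⟨K, hKz⟩ := (Module.End.mem_maxGenEigenspace _ _ _).mp hzG
      have hKne : K ≠ 0 := by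
        rintro rfl
        rw [pow_zero, Module.End.one_apply] at hKz
        subst hKz
        rw [Matrix.mulVec_zero, dotProduct_zero] at hωwz
        exact hωwz rfl
      obtain ⟨K', rfl⟩ : ∃ K', K = K' + 1 := ⟨K - 1, by omega⟩
      obtain ⟨a', ha'⟩ := hNk K'
      rw [hKz] at ha'
      have hb : b = 0 := by
        have := (LinearIndependent.pair_iff.mp hli a' (b^(K'+1)) ha'.symm).2
        exact pow_eq_zero_iff (by omega) |>.mp this
      rw [hb, zero_smul, add_zero] at hab
      have ha0 : a ≠ 0 := by
        rintro rfl
        rw [zero_smul] at hab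
        exact hNz hab.symm
      have hsym : ((Matrix.toLin' M - c i • 1) z) ⬝ᵥ (A *ᵥ z)
          = z ⬝ᵥ (A *ᵥ ((Matrix.toLin' M - c i • 1) z)) := by
        simp only [LinearMap.sub_apply, LinearMap.smul_apply, Module.End.one_apply,
          sub_dotProduct, smul_dotProduct, Matrix.mulVec_sub,
          Matrix.mulVec_smul, dotProduct_sub, dotProduct_smul]
        rw [hsa]
      rw [← hab, smul_dotProduct, Matrix.mulVec_smul, dotProduct_smul,
        smul_eq_mul, smul_eq_mul] at hsym
      rw [hskew w z] at hsym
      have : a * (w ⬝ᵥ (A *ᵥ z)) = 0 := by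
        have h2 : (2 : ℂ) * (a * (w ⬝ᵥ (A *ᵥ z))) = 0 := by ring_nf; linear_combination hsym
        rcases mul_eq_zero.mp h2 with h | h
        · norm_num at h
        · exact h
      rcases mul_eq_zero.mp this with h | h
      · exact ha0 h
      · exact hωwz h
  choose u v huG hvG hufix hvfix hωuv using hpair
  -- eigen relations in matrix form
  have hMu : ∀ i, M *ᵥ (u i) = c i • u i := by
    intro i
    rw [← Matrix.toLin'_apply, hufix]
  have hMv : ∀ i, M *ᵥ (v i) = c i • v i := by
    intro i
    rw [← Matrix.toLin'_apply, hvfix]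
  have hBu : ∀ i, B *ᵥ (u i) = c i • (A *ᵥ u i) := by
    intro i
    rw [← hAM, ← Matrix.mulVec_mulVec, hMu, Matrix.mulVec_smul]
  have hBv : ∀ i, B *ᵥ (v i) = c i • (A *ᵥ v i) := by
    intro i
    rw [← hAM, ← Matrix.mulVec_mulVec, hMv, Matrix.mulVec_smul]
  -- the Gram table
  have hωuv' : ∀ i j, (u i) ⬝ᵥ (A *ᵥ (v j)) = if i = j then 1 else 0 := by
    intro i j
    by_cases h : i = j
    · subst h; rw [if_pos rfl]; exact hωuv i
    · rw [if_neg h]; exact hGorth i j h _ (huG i) _ (hvG j)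
  have hωuu : ∀ i j, (u i) ⬝ᵥ (A *ᵥ (u j)) = 0 := by
    intro i j
    by_cases h : i = j
    · subst h; exact hself _
    · exact hGorth i j h _ (huG i) _ (huG j)
  have hωvv : ∀ i j, (v i) ⬝ᵥ (A *ᵥ (v j)) = 0 := by
    intro i j
    by_cases h : i = j
    · subst h; exact hself _
    · exact hGorth i j h _ (hvG i) _ (hvG j)
  have hωvu : ∀ i j, (v i) ⬝ᵥ (A *ᵥ (u j)) = -(if j = i then 1 else 0) := by
    intro i j
    rw [hskew (u j) (v i), hωuv' j i]
  -- assemble the matrix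
  set bvec : Fin (2*r) → (Fin (2*r) → ℂ) :=
    fun k => if (k:ℕ) % 2 = 0 then u (Stmt4Aux.idx k) else v (Stmt4Aux.idx k) with hbvec
  have hXE : ∀ (N : Matrix (Fin (2*r)) (Fin (2*r)) ℂ) k l,
      (Matrix.of bvec * N * (Matrix.of bvec)ᵀ) k l = bvec k ⬝ᵥ (N *ᵥ bvec l) := by
    intro N k l
    simp only [Matrix.mul_apply, Matrix.transpose_apply, Matrix.of_apply,
      dotProduct, Matrix.mulVec, Finset.sum_mul, Finset.mul_sum]
    rw [Finset.sum_comm]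
    exact Finset.sum_congr rfl fun j _ => Finset.sum_congr rfl fun m _ => by ring
  have hbb : ∀ k l, bvec k ⬝ᵥ (A *ᵥ bvec l) = Stmt4Aux.pat k l := by
    intro k l
    have hk2 := k.isLt
    have hl2 := l.isLt
    have hmemb : ∀ k : Fin (2*r),
        bvec k ∈ Module.End.maxGenEigenspace (Matrix.toLin' M) (c (Stmt4Aux.idx k)) := by
      intro k
      rw [hbvec]
      dsimp only
      split_ifs
      · exact huG _
      · exact hvG _
    by_cases hq : (k:ℕ)/2 = (l:ℕ)/2
    · -- same block
      by_cases hpk : (k:ℕ) % 2 = 0 <;> by_cases hpl : (l:ℕ) % 2 = 0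
      · -- both even : k = l
        have hkl : k = l := Fin.ext (by omega)
        subst hkl
        rw [hself]
        simp only [Stmt4Aux.pat]
        split_ifs <;> (try rfl) <;> (exfalso; omega)
      · -- k even, l odd : l = k+1
        have hidx : Stmt4Aux.idx k = Stmt4Aux.idx l := by
          simp only [Stmt4Aux.idx, Fin.ext_iff]; omega
        rw [hbvec]
        dsimp only
        rw [if_pos hpk, if_neg hpl, hidx, hωuv', if_pos rfl]
        simp only [Stmt4Aux.pat]
        rw [if_pos ⟨by omega, hpk⟩]
      · -- k odd, l even : k = l+1
        have hidx : Stmt4Aux.idx l = Stmt4Aux.idx k := by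
          simp only [Stmt4Aux.idx, Fin.ext_iff]; omega
        rw [hbvec]
        dsimp only
        rw [if_neg hpk, if_pos hpl, hidx, hωvu, if_pos rfl]
        simp only [Stmt4Aux.pat]
        rw [if_neg (by omega), if_pos ⟨by omega, hpl⟩]
      · -- both odd : k = l
        have hkl : k = l := Fin.ext (by omega)
        subst hkl
        rw [hself]
        simp only [Stmt4Aux.pat]
        split_ifs <;> (try rfl) <;> (exfalso; omega)
    · -- different blocks
      have hne : Stmt4Aux.idx k ≠ Stmt4Aux.idx l := by
        intro h
        exact hq (by simpa [Stmt4Aux.idx, Fin.ext_iff] using h)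
      rw [hGorth _ _ hne _ (hmemb k) _ (hmemb l)]
      simp only [Stmt4Aux.pat]
      split_ifs with h1 h2
      · exfalso; omega
      · exfalso; omega
      · rfl
  have hbbB : ∀ k l, bvec k ⬝ᵥ (B *ᵥ bvec l) = c (Stmt4Aux.idx l) * Stmt4Aux.pat k l := by
    intro k l
    have hBl : B *ᵥ bvec l = c (Stmt4Aux.idx l) • (A *ᵥ bvec l) := by
      rw [hbvec]
      dsimp only
      split_ifs
      · exact hBu _
      · exact hBv _
    rw [hBl, dotProduct_smul, smul_eq_mul, hbb]
  refine ⟨Matrix.of bvec, ?_, ?_, ?_⟩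
  case refine_2 =>
    ext k l
    rw [hXE A k l, hbb k l]
    have := Stmt4Aux.sum_skew_apply (fun _ => (1:ℂ)) k l
    simp only [one_smul, one_mul] at this
    rw [this]
  case refine_3 =>
    ext k l
    rw [hXE B k l, hbbB k l]
    rw [Stmt4Aux.sum_skew_apply c k l]
  case refine_1 =>
    have hXA : Matrix.of bvec * A * (Matrix.of bvec)ᵀ
        = ∑ i : Fin r, skewS (⟨2*(i:ℕ), by omega⟩ : Fin (2*r)) ⟨2*(i:ℕ)+1, by omega⟩ := by
      ext k l
      rw [hXE A k l, hbb k l]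
      have := Stmt4Aux.sum_skew_apply (fun _ => (1:ℂ)) k l
      simp only [one_smul, one_mul] at this
      rw [this]
    have hPdet : IsUnit ((∑ i : Fin r,
        skewS (⟨2*(i:ℕ), by omega⟩ : Fin (2*r)) ⟨2*(i:ℕ)+1, by omega⟩).det) := by
      have h2 := congrArg Matrix.det (Stmt4Aux.P_mul_P (r := r))
      rw [Matrix.det_mul] at h2
      have h3 : ((-1 : Matrix (Fin (2*r)) (Fin (2*r)) ℂ)).det = 1 := by
        have := Matrix.det_neg (1 : Matrix (Fin (2*r)) (Fin (2*r)) ℂ)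
        rwa [Matrix.det_one, mul_one, Fintype.card_fin, (even_two_mul r).neg_one_pow] at this
      rw [h3] at h2
      exact IsUnit.of_mul_eq_one _ h2
    have h1 : IsUnit ((Matrix.of bvec * A * (Matrix.of bvec)ᵀ).det) := by
      rw [hXA]
      exact hPdet
    rw [Matrix.det_mul, Matrix.det_mul, Matrix.det_transpose] at h1
    exact (Matrix.isUnit_iff_isUnit_det _).mpr
      (isUnit_of_mul_isUnit_left (isUnit_of_mul_isUnit_left h1))
end

section
/- Let u, v : ℝ⁴ → ℝ be smooth functions satisfying, at every point of ℝ⁴, the equations u₂ − v₁ = 0 and u₃ + v₄ + u₁v₂ − u₂v₁ = 0, where subscripts denote partial derivatives with respect to the corresponding coordinate. For λ ∈ ℝ define vector fields X, Y : ℝ⁴ → ℝ⁴ by X(x) = e₄ + u₁(x)·e₂ + (λ − u₂(x))·e₁ and Y(x) = e₃ + v₂(x)·e₁ − (v₁(x) + λ)·e₂. Then for every λ ∈ ℝ the Lie bracket [X, Y] vanishes identically on ℝ⁴. -/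
/-- The `i`-th standard basis vector of `ℝ^d` (0-based index). -/
def stdV (d i : ℕ) : Fin d → ℝ := fun j => if (j : ℕ) = i then 1 else 0

/-- Partial derivative of `f : ℝ^d → ℝ` in the `i`-th coordinate direction (0-based index). -/
noncomputable def pd (d : ℕ) (f : (Fin d → ℝ) → ℝ) (i : ℕ) (x : Fin d → ℝ) : ℝ :=
  fderiv ℝ f x (stdV d i)

/-- Lie bracket of vector fields: `[X,Y](x) = DY(x)(X(x)) - DX(x)(Y(x))`. -/
noncomputable def lieB (d : ℕ) (X Y : (Fin d → ℝ) → (Fin d → ℝ)) (x : Fin d → ℝ) :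
    Fin d → ℝ :=
  fderiv ℝ Y x (X x) - fderiv ℝ X x (Y x)

lemma pd_contDiff {f : (Fin 4 → ℝ) → ℝ} (hf : ContDiff ℝ (⊤ : ℕ∞) f) (i : ℕ) :
    ContDiff ℝ (⊤ : ℕ∞) (pd 4 f i) := by
  have h : ContDiff ℝ (⊤ : ℕ∞) (fderiv ℝ f) := hf.fderiv_right (by exact_mod_cast le_top)
  exact h.clm_apply contDiff_const

lemma one_le_top' : (1 : WithTop ℕ∞) ≤ ((⊤ : ℕ∞) : WithTop ℕ∞) := by
  rw [show ((1 : WithTop ℕ∞)) = ((1:ℕ∞) : WithTop ℕ∞) by norm_cast]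
  exact_mod_cast le_top

lemma pd_diff {f : (Fin 4 → ℝ) → ℝ} (hf : ContDiff ℝ (⊤ : ℕ∞) f) (i : ℕ)
    (x : Fin 4 → ℝ) : DifferentiableAt ℝ (pd 4 f i) x :=
  ((pd_contDiff hf i).differentiable (by simp)) x

lemma fderiv_pd {f : (Fin 4 → ℝ) → ℝ} (hf : ContDiff ℝ (⊤ : ℕ∞) f) (i : ℕ)
    (x w : Fin 4 → ℝ) :
    fderiv ℝ (pd 4 f i) x w = fderiv ℝ (fderiv ℝ f) x w (stdV 4 i) := by
  have h : ContDiff ℝ (⊤ : ℕ∞) (fderiv ℝ f) := hf.fderiv_right (by exact_mod_cast le_top)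
  have hd : DifferentiableAt ℝ (fderiv ℝ f) x := (h.differentiable (by simp)) x
  have he : pd 4 f i = fun y => (fderiv ℝ f y) (stdV 4 i) := rfl
  rw [he, fderiv_clm_apply hd (differentiableAt_const _)]
  simp

lemma pd_symm {f : (Fin 4 → ℝ) → ℝ} (hf : ContDiff ℝ (⊤ : ℕ∞) f) (i j : ℕ)
    (x : Fin 4 → ℝ) :
    fderiv ℝ (pd 4 f i) x (stdV 4 j) = fderiv ℝ (pd 4 f j) x (stdV 4 i) := by
  rw [fderiv_pd hf, fderiv_pd hf]
  refine (hf.contDiffAt.isSymmSndFDerivAt ?_) _ _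
  rw [minSmoothness_of_isRCLikeNormedField]
  rw [show ((2 : WithTop ℕ∞)) = ((2:ℕ∞) : WithTop ℕ∞) by norm_cast]
  exact_mod_cast le_top

theorem stmt6 (u v : (Fin 4 → ℝ) → ℝ)
    (hu : ContDiff ℝ (⊤ : ℕ∞) u) (hv : ContDiff ℝ (⊤ : ℕ∞) v)
    (h1 : ∀ x, pd 4 u 1 x - pd 4 v 0 x = 0)
    (h2 : ∀ x, pd 4 u 2 x + pd 4 v 3 x
        + pd 4 u 0 x * pd 4 v 1 x - pd 4 u 1 x * pd 4 v 0 x = 0) :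
    ∀ lam : ℝ, ∀ x : Fin 4 → ℝ,
      lieB 4
        (fun y => stdV 4 3 + pd 4 u 0 y • stdV 4 1 + (lam - pd 4 u 1 y) • stdV 4 0)
        (fun y => stdV 4 2 + pd 4 v 1 y • stdV 4 0 - (pd 4 v 0 y + lam) • stdV 4 1)
        x = 0 := by
  intro lam x
  -- h1 as an equality of functions
  have h1f : pd 4 u 1 = pd 4 v 0 := funext fun y => sub_eq_zero.mp (h1 y)
  -- derivatives of the vector fields
  have hX : HasFDerivAt
      (fun y => stdV 4 3 + pd 4 u 0 y • stdV 4 1 + (lam - pd 4 u 1 y) • stdV 4 0)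
      ((0 + (fderiv ℝ (pd 4 u 0) x).smulRight (stdV 4 1))
        + ((0 - fderiv ℝ (pd 4 u 1) x).smulRight (stdV 4 0))) x :=
    ((hasFDerivAt_const _ _).add ((pd_diff hu 0 x).hasFDerivAt.smul_const _)).add
      (((hasFDerivAt_const lam x).sub (pd_diff hu 1 x).hasFDerivAt).smul_const _)
  have hY : HasFDerivAt
      (fun y => stdV 4 2 + pd 4 v 1 y • stdV 4 0 - (pd 4 v 0 y + lam) • stdV 4 1)
      ((0 + (fderiv ℝ (pd 4 v 1) x).smulRight (stdV 4 0))
        - (((fderiv ℝ (pd 4 v 0) x) + 0).smulRight (stdV 4 1))) x :=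
    ((hasFDerivAt_const _ _).add ((pd_diff hv 1 x).hasFDerivAt.smul_const _)).sub
      (((pd_diff hv 0 x).hasFDerivAt.add (hasFDerivAt_const lam x)).smul_const _)
  -- derivative of the identity h2 is zero
  have hg : HasFDerivAt
      (fun y => pd 4 u 2 y + pd 4 v 3 y + pd 4 u 0 y * pd 4 v 1 y
        - pd 4 u 1 y * pd 4 v 0 y)
      (((fderiv ℝ (pd 4 u 2) x + fderiv ℝ (pd 4 v 3) x)
        + (pd 4 u 0 x • fderiv ℝ (pd 4 v 1) x + pd 4 v 1 x • fderiv ℝ (pd 4 u 0) x))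
        - (pd 4 u 1 x • fderiv ℝ (pd 4 v 0) x + pd 4 v 0 x • fderiv ℝ (pd 4 u 1) x)) x :=
    (((pd_diff hu 2 x).hasFDerivAt.add (pd_diff hv 3 x).hasFDerivAt).add
      ((pd_diff hu 0 x).hasFDerivAt.mul (pd_diff hv 1 x).hasFDerivAt)).sub
      ((pd_diff hu 1 x).hasFDerivAt.mul (pd_diff hv 0 x).hasFDerivAt)
  have hgz : (fun y => pd 4 u 2 y + pd 4 v 3 y + pd 4 u 0 y * pd 4 v 1 y
        - pd 4 u 1 y * pd 4 v 0 y) = (fun _ => (0:ℝ)) := funext h2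
  rw [hgz] at hg
  have hD := hg.unique (hasFDerivAt_const (0:ℝ) x)
  have hD2 : ∀ w : Fin 4 → ℝ,
      fderiv ℝ (pd 4 u 2) x w + fderiv ℝ (pd 4 v 3) x w
      + (pd 4 u 0 x * fderiv ℝ (pd 4 v 1) x w + pd 4 v 1 x * fderiv ℝ (pd 4 u 0) x w)
      - (pd 4 u 1 x * fderiv ℝ (pd 4 v 0) x w + pd 4 v 0 x * fderiv ℝ (pd 4 u 1) x w)
      = 0 := by
    intro w
    have := congrArg (fun L : (Fin 4 → ℝ) →L[ℝ] ℝ => L w) hD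
    simpa [smul_eq_mul] using this
  -- the two key scalar identities
  set Xx : Fin 4 → ℝ :=
    stdV 4 3 + pd 4 u 0 x • stdV 4 1 + (lam - pd 4 u 1 x) • stdV 4 0 with hXx
  set Yx : Fin 4 → ℝ :=
    stdV 4 2 + pd 4 v 1 x • stdV 4 0 - (pd 4 v 0 x + lam) • stdV 4 1 with hYx
  have expand : ∀ (f : (Fin 4 → ℝ) → ℝ) (i : ℕ),
      fderiv ℝ (pd 4 f i) x Xx
        = fderiv ℝ (pd 4 f i) x (stdV 4 3)
          + pd 4 u 0 x * fderiv ℝ (pd 4 f i) x (stdV 4 1)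
          + (lam - pd 4 u 1 x) * fderiv ℝ (pd 4 f i) x (stdV 4 0) := by
    intro f i; rw [hXx]; simp [smul_eq_mul]
  have expandY : ∀ (f : (Fin 4 → ℝ) → ℝ) (i : ℕ),
      fderiv ℝ (pd 4 f i) x Yx
        = fderiv ℝ (pd 4 f i) x (stdV 4 2)
          + pd 4 v 1 x * fderiv ℝ (pd 4 f i) x (stdV 4 0)
          - (pd 4 v 0 x + lam) * fderiv ℝ (pd 4 f i) x (stdV 4 1) := by
    intro f i; rw [hYx]; simp [smul_eq_mul]
  have e0 : fderiv ℝ (pd 4 u 1) x = fderiv ℝ (pd 4 v 0) x := by rw [h1f]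
  have e1 : pd 4 u 1 x = pd 4 v 0 x := sub_eq_zero.mp (h1 x)
  have key0 : fderiv ℝ (pd 4 v 1) x Xx + fderiv ℝ (pd 4 u 1) x Yx = 0 := by
    rw [expand, expandY]
    have s1 := pd_symm hv 1 3 x
    have s2 := pd_symm hv 1 0 x
    have s3 := pd_symm hu 1 2 x
    have s4 := pd_symm hu 1 0 x
    have e01 : fderiv ℝ (pd 4 u 1) x (stdV 4 1) = fderiv ℝ (pd 4 v 0) x (stdV 4 1) := by
      rw [e0]
    have hd := hD2 (stdV 4 1)
    rw [e1, e01] at hd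
    rw [s1, s2, s3, s4, e01, e1]
    linear_combination hd
  have key1 : fderiv ℝ (pd 4 v 0) x Xx + fderiv ℝ (pd 4 u 0) x Yx = 0 := by
    rw [expand, expandY]
    have s1 := pd_symm hv 0 3 x
    have s2 := pd_symm hv 0 1 x
    have s3 := pd_symm hu 0 2 x
    have s4 := pd_symm hu 0 1 x
    have e00 : fderiv ℝ (pd 4 u 1) x (stdV 4 0) = fderiv ℝ (pd 4 v 0) x (stdV 4 0) := by
      rw [e0]
    have hd := hD2 (stdV 4 0)
    rw [e1, e00] at hd
    rw [s1, s2, s3, s4, e00, e1]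
    linear_combination hd
  -- conclude
  simp only [lieB]
  rw [hX.fderiv, hY.fderiv]
  simp only [ContinuousLinearMap.coe_sub', ContinuousLinearMap.coe_add',
    Pi.sub_apply, Pi.add_apply, ContinuousLinearMap.smulRight_apply,
    ContinuousLinearMap.zero_apply, ContinuousLinearMap.sub_apply,
    ContinuousLinearMap.add_apply]
  rw [← hXx, ← hYx]
  have a0 : fderiv ℝ (pd 4 v 1) x Xx = -fderiv ℝ (pd 4 u 1) x Yx := by linarith [key0]
  have a1 : fderiv ℝ (pd 4 v 0) x Xx = -fderiv ℝ (pd 4 u 0) x Yx := by linarith [key1]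
  rw [a0, a1]
  module
end

section
/- Let u, v : ℝ⁵ → ℝ be smooth functions satisfying, at every point of ℝ⁵, the equations u₂ − v₁ = 0 and u₁ + v₅ + u₃v₄ − u₄v₃ = 0, where subscripts denote partial derivatives with respect to the corresponding coordinate. For λ ∈ ℝ define vector fields X, Y : ℝ⁵ → ℝ⁵ by X(x) = e₅ + u₃(x)·e₄ − u₄(x)·e₃ + λ·e₁ and Y(x) = e₁ − v₃(x)·e₄ + v₄(x)·e₃ − λ·e₂. Then for every λ ∈ ℝ the Lie bracket [X, Y] vanishes identically on ℝ⁵. -/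
lemma pd_hasFDerivAt {f : (Fin 5 → ℝ) → ℝ} (hf : ContDiff ℝ (⊤ : ℕ∞) f)
    (i : ℕ) (x : Fin 5 → ℝ) :
    HasFDerivAt (pd 5 f i)
      ((ContinuousLinearMap.apply ℝ ℝ (stdV 5 i)).comp (fderiv ℝ (fderiv ℝ f) x)) x := by
  have h1 : HasFDerivAt (fderiv ℝ f) (fderiv ℝ (fderiv ℝ f) x) x :=
    ((hf.fderiv_right (m := ((⊤:ℕ∞) : WithTop ℕ∞)) (by norm_num)).differentiable
      (by norm_num) x).hasFDerivAt
  exact ((ContinuousLinearMap.apply ℝ ℝ (stdV 5 i)).hasFDerivAt).comp x h1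

lemma pd_hasFDerivAt' {f : (Fin 5 → ℝ) → ℝ} (hf : ContDiff ℝ (⊤ : ℕ∞) f)
    (i : ℕ) (x : Fin 5 → ℝ) :
    HasFDerivAt (pd 5 f i) (fderiv ℝ (pd 5 f i) x) x :=
  (pd_hasFDerivAt hf i x).differentiableAt.hasFDerivAt

lemma P_symm {f : (Fin 5 → ℝ) → ℝ} (hf : ContDiff ℝ (⊤ : ℕ∞) f) (i j : ℕ) (x : Fin 5 → ℝ) :
    fderiv ℝ (pd 5 f i) x (stdV 5 j) = fderiv ℝ (pd 5 f j) x (stdV 5 i) := by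
  rw [(pd_hasFDerivAt hf i x).fderiv, (pd_hasFDerivAt hf j x).fderiv]
  simp only [ContinuousLinearMap.coe_comp', Function.comp_apply,
    ContinuousLinearMap.apply_apply]
  exact (hf.contDiffAt.isSymmSndFDerivAt (by rw [minSmoothness_of_isRCLikeNormedField]; exact WithTop.coe_le_coe.2 le_top)) _ _

theorem stmt10 (u v : (Fin 5 → ℝ) → ℝ)
    (hu : ContDiff ℝ (⊤ : ℕ∞) u) (hv : ContDiff ℝ (⊤ : ℕ∞) v)
    (h1 : ∀ x, pd 5 u 1 x - pd 5 v 0 x = 0)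
    (h2 : ∀ x, pd 5 u 0 x + pd 5 v 4 x
        + pd 5 u 2 x * pd 5 v 3 x - pd 5 u 3 x * pd 5 v 2 x = 0) :
    ∀ lam : ℝ, ∀ x : Fin 5 → ℝ,
      lieB 5
        (fun y => stdV 5 4 + pd 5 u 2 y • stdV 5 3 - pd 5 u 3 y • stdV 5 2 + lam • stdV 5 0)
        (fun y => stdV 5 0 - pd 5 v 2 y • stdV 5 3 + pd 5 v 3 y • stdV 5 2 - lam • stdV 5 1)
        x = 0 := by
  intro lam x
  -- the first constraint, differentiated
  have hc1 : ∀ w : Fin 5 → ℝ,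
      fderiv ℝ (pd 5 u 1) x w = fderiv ℝ (pd 5 v 0) x w := by
    have he : pd 5 u 1 = pd 5 v 0 := funext fun y => sub_eq_zero.1 (h1 y)
    intro w; rw [he]
  -- the second constraint, differentiated
  have hc2 : ∀ w : Fin 5 → ℝ,
      fderiv ℝ (pd 5 u 0) x w + fderiv ℝ (pd 5 v 4) x w
        + (fderiv ℝ (pd 5 u 2) x w * pd 5 v 3 x + pd 5 u 2 x * fderiv ℝ (pd 5 v 3) x w)
        - (fderiv ℝ (pd 5 u 3) x w * pd 5 v 2 x + pd 5 u 3 x * fderiv ℝ (pd 5 v 2) x w)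
        = 0 := by
    intro w
    have hF : HasFDerivAt
        (fun y => pd 5 u 0 y + pd 5 v 4 y + pd 5 u 2 y * pd 5 v 3 y
          - pd 5 u 3 y * pd 5 v 2 y)
        (fderiv ℝ (pd 5 u 0) x + fderiv ℝ (pd 5 v 4) x
          + (pd 5 u 2 x • fderiv ℝ (pd 5 v 3) x + pd 5 v 3 x • fderiv ℝ (pd 5 u 2) x)
          - (pd 5 u 3 x • fderiv ℝ (pd 5 v 2) x + pd 5 v 2 x • fderiv ℝ (pd 5 u 3) x)) x :=
      (((pd_hasFDerivAt' hu 0 x).add (pd_hasFDerivAt' hv 4 x)).add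
        ((pd_hasFDerivAt' hu 2 x).mul (pd_hasFDerivAt' hv 3 x))).sub
        ((pd_hasFDerivAt' hu 3 x).mul (pd_hasFDerivAt' hv 2 x))
    have hF0 : HasFDerivAt
        (fun y => pd 5 u 0 y + pd 5 v 4 y + pd 5 u 2 y * pd 5 v 3 y
          - pd 5 u 3 y * pd 5 v 2 y) (0 : (Fin 5 → ℝ) →L[ℝ] ℝ) x := by
      have : (fun y => pd 5 u 0 y + pd 5 v 4 y + pd 5 u 2 y * pd 5 v 3 y
          - pd 5 u 3 y * pd 5 v 2 y) = fun _ => (0:ℝ) := funext h2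
      rw [this]; exact hasFDerivAt_const 0 x
    have h := congrArg (fun L : (Fin 5 → ℝ) →L[ℝ] ℝ => L w) (hF.unique hF0)
    simp only [ContinuousLinearMap.add_apply, ContinuousLinearMap.sub_apply,
      ContinuousLinearMap.smul_apply, ContinuousLinearMap.zero_apply, smul_eq_mul] at h
    linarith
  -- the two key scalar identities
  have hA : fderiv ℝ (pd 5 v 2) x
        (stdV 5 4 + pd 5 u 2 x • stdV 5 3 - pd 5 u 3 x • stdV 5 2 + lam • stdV 5 0)
      + fderiv ℝ (pd 5 u 2) x
        (stdV 5 0 - pd 5 v 2 x • stdV 5 3 + pd 5 v 3 x • stdV 5 2 - lam • stdV 5 1) = 0 := by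
    have e1 := hc2 (stdV 5 2)
    have s1 := P_symm hv 2 4 x
    have s2 := P_symm hv 2 3 x
    have s3 := P_symm hv 2 0 x
    have s4 := P_symm hu 2 0 x
    have s5 := P_symm hu 2 3 x
    have s6 := P_symm hu 2 1 x
    have s7 := hc1 (stdV 5 2)
    simp only [map_add, map_sub, map_smul, smul_eq_mul]
    rw [s1, s2, s3, s4, s5, s6, s7]
    linear_combination e1
  have hB : fderiv ℝ (pd 5 v 3) x
        (stdV 5 4 + pd 5 u 2 x • stdV 5 3 - pd 5 u 3 x • stdV 5 2 + lam • stdV 5 0)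
      + fderiv ℝ (pd 5 u 3) x
        (stdV 5 0 - pd 5 v 2 x • stdV 5 3 + pd 5 v 3 x • stdV 5 2 - lam • stdV 5 1) = 0 := by
    have e2 := hc2 (stdV 5 3)
    have s1 := P_symm hv 3 4 x
    have s2 := P_symm hv 3 2 x
    have s3 := P_symm hv 3 0 x
    have s4 := P_symm hu 3 0 x
    have s5 := P_symm hu 3 2 x
    have s6 := P_symm hu 3 1 x
    have s7 := hc1 (stdV 5 3)
    simp only [map_add, map_sub, map_smul, smul_eq_mul]
    rw [s1, s2, s3, s4, s5, s6, s7]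
    linear_combination e2
  -- derivatives of the two vector fields
  have hX : HasFDerivAt
      (fun y => stdV 5 4 + pd 5 u 2 y • stdV 5 3 - pd 5 u 3 y • stdV 5 2 + lam • stdV 5 0)
      (0 + (fderiv ℝ (pd 5 u 2) x).smulRight (stdV 5 3)
        - (fderiv ℝ (pd 5 u 3) x).smulRight (stdV 5 2)) x :=
    (((hasFDerivAt_const (stdV 5 4) x).add
      ((pd_hasFDerivAt' hu 2 x).smul_const (stdV 5 3))).sub
      ((pd_hasFDerivAt' hu 3 x).smul_const (stdV 5 2))).add_const (lam • stdV 5 0)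
  have hY : HasFDerivAt
      (fun y => stdV 5 0 - pd 5 v 2 y • stdV 5 3 + pd 5 v 3 y • stdV 5 2 - lam • stdV 5 1)
      (0 - (fderiv ℝ (pd 5 v 2) x).smulRight (stdV 5 3)
        + (fderiv ℝ (pd 5 v 3) x).smulRight (stdV 5 2)) x :=
    (((hasFDerivAt_const (stdV 5 0) x).sub
      ((pd_hasFDerivAt' hv 2 x).smul_const (stdV 5 3))).add
      ((pd_hasFDerivAt' hv 3 x).smul_const (stdV 5 2))).sub_const (lam • stdV 5 1)
  rw [lieB, hX.fderiv, hY.fderiv]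
  simp only [ContinuousLinearMap.add_apply, ContinuousLinearMap.sub_apply,
    ContinuousLinearMap.zero_apply, ContinuousLinearMap.smulRight_apply]
  have e1 : fderiv ℝ (pd 5 u 2) x
        (stdV 5 0 - pd 5 v 2 x • stdV 5 3 + pd 5 v 3 x • stdV 5 2 - lam • stdV 5 1)
      = - fderiv ℝ (pd 5 v 2) x
        (stdV 5 4 + pd 5 u 2 x • stdV 5 3 - pd 5 u 3 x • stdV 5 2 + lam • stdV 5 0) := by
    linarith
  have e2 : fderiv ℝ (pd 5 u 3) x
        (stdV 5 0 - pd 5 v 2 x • stdV 5 3 + pd 5 v 3 x • stdV 5 2 - lam • stdV 5 1)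
      = - fderiv ℝ (pd 5 v 3) x
        (stdV 5 4 + pd 5 u 2 x • stdV 5 3 - pd 5 u 3 x • stdV 5 2 + lam • stdV 5 0) := by
    linarith
  rw [e1, e2]
  module
end
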